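/- arXiv:2305.18963 — 10 statements merged into one kernel-verified Lean document; each statement's English description precedes it below -/
import Mathlib

section
/- Let K ⊆ M ⊆ L be a tower of fields with M relatively perfect over K. Then L is separable over K if and only if L is separable over M. -/
set_option maxHeartbeats 1000000
set_option synthInstance.maxHeartbeats 400000

/-! STATEMENT 1: in a tower `K ⊆ M ⊆ L` with `M/K` relatively perfect,
`L/K` is separable iff `L/M` is separable. -/

/-- A finite tuple `b` of elements of `Ω` is linearly independent over the subfield `A`. -/
def LinIndepOver {Ω : Type*} [Field Ω] (A : Subfield Ω) {n : ℕ} (b : Fin n → Ω) : Prop :=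
  ∀ c : Fin n → Ω, (∀ i, c i ∈ A) → (∑ i, c i * b i) = 0 → ∀ i, c i = 0

/-- Subfields `B` and `C` of `Ω` are linearly disjoint over `A`. -/
def LinDisjOver {Ω : Type*} [Field Ω] (A B C : Subfield Ω) : Prop :=
  ∀ (n : ℕ) (b : Fin n → Ω), (∀ i, b i ∈ B) → LinIndepOver A b → LinIndepOver C b

/-- The field extension `K/k` is separable: `k` and `K^p` are linearly disjoint over `k^p`. -/
def IsSepExt {Ω : Type*} [Field Ω] (p : ℕ) [ExpChar Ω p] (k K : Subfield Ω) : Prop :=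
  LinDisjOver (k.map (frobenius Ω p)) k (K.map (frobenius Ω p))

/-- The extension `K/k` is relatively perfect: separable, and `K` is generated as a
field by `k` together with `K^p`. -/
def IsRelPerfectExt {Ω : Type*} [Field Ω] (p : ℕ) [ExpChar Ω p] (k K : Subfield Ω) : Prop :=
  IsSepExt p k K ∧ k ⊔ K.map (frobenius Ω p) = K

section Aux

open Submodule Pointwise

variable {Ω : Type*} [Field Ω]

/-- A span over a smaller subfield is contained in the span over a larger subfield. -/
lemma span_le_span_of_le {A B : Subfield Ω} (hAB : A ≤ B) {s : Set Ω} {x : Ω}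
    (hx : x ∈ span A s) : x ∈ span B s := by
  induction hx using Submodule.span_induction with
  | mem y hy => exact subset_span hy
  | zero => exact zero_mem _
  | add y z _ _ hy hz => exact add_mem hy hz
  | smul c y _ hy => exact Submodule.smul_mem _ (⟨(c : Ω), hAB c.2⟩ : B) hy

/-- A span over a subfield `A` of a subset of a subfield `C ⊇ A` stays inside `C`. -/
lemma span_subset_subfield {A C : Subfield Ω} (hAC : A ≤ C) {s : Set Ω} (hs : s ⊆ C) {x : Ω}
    (hx : x ∈ span A s) : x ∈ C := by
  induction hx using Submodule.span_induction with
  | mem y hy => exact hs hy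
  | zero => exact zero_mem C
  | add y z _ _ hy hz => exact add_mem hy hz
  | smul c y _ hy => exact mul_mem (hAC c.2) hy

lemma linIndepOver_of_linearIndependent {A : Subfield Ω} {n : ℕ} {v : Fin n → Ω}
    (h : LinearIndependent A v) : LinIndepOver A v := by
  intro c hc hsum i
  have h2 : ∀ i, (⟨c i, hc i⟩ : A) = 0 := by
    refine Fintype.linearIndependent_iff.1 h (fun j => ⟨c j, hc j⟩) ?_
    have he : ∀ i, ((⟨c i, hc i⟩ : A)) • v i = c i * v i := fun i => rfl
    simp only [he]
    exact hsum
  simpa using congrArg Subtype.val (h2 i)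

lemma frobenius_map_le (p : ℕ) [ExpChar Ω p] (A : Subfield Ω) :
    A.map (frobenius Ω p) ≤ A := by
  rintro x ⟨y, hy, rfl⟩
  exact pow_mem hy p

/-- Key span lemma: if `M = K ⊔ M^p`, then `M` is spanned by `K` over `M^p`. -/
lemma mem_span_of_relPerfect (p : ℕ) [ExpChar Ω p] {K M : Subfield Ω} (hKM : K ≤ M)
    (hgen : K ⊔ M.map (frobenius Ω p) = M) {x : Ω} (hx : x ∈ M) :
    x ∈ span (M.map (frobenius Ω p)) (K : Set Ω) := by
  set Mp := M.map (frobenius Ω p) with hMp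
  have hMpM : Mp ≤ M := frobenius_map_le p M
  -- the span is contained in M
  have hsub : ∀ y ∈ span Mp (K : Set Ω), y ∈ M := fun y hy =>
    span_subset_subfield hMpM hKM hy
  -- the span is closed under multiplication
  have hmul : ∀ y z : Ω, y ∈ span Mp (K : Set Ω) → z ∈ span Mp (K : Set Ω) →
      y * z ∈ span Mp (K : Set Ω) := by
    intro y z hy hz
    have h1 : y * z ∈ span Mp (K : Set Ω) * span Mp (K : Set Ω) :=
      Submodule.mul_mem_mul hy hz
    rw [Submodule.span_mul_span] at h1
    refine Submodule.span_mono ?_ h1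
    rintro w ⟨u, hu, v, hv, rfl⟩
    exact mul_mem hu hv
  have hpow : ∀ y : Ω, y ∈ span Mp (K : Set Ω) → ∀ t : ℕ, y ^ t ∈ span Mp (K : Set Ω) := by
    intro y hy t
    induction t with
    | zero => simpa using subset_span (one_mem K)
    | succ t ih => rw [pow_succ]; exact hmul _ _ ih hy
  -- build the subfield
  let S : Subfield Ω :=
    { carrier := (span Mp (K : Set Ω) : Set Ω)
      mul_mem' := fun ha hb => hmul _ _ ha hb
      one_mem' := subset_span (one_mem K)
      add_mem' := fun ha hb => add_mem ha hb
      zero_mem' := zero_mem _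
      neg_mem' := fun ha => neg_mem ha
      inv_mem' := by
        intro y hy
        rcases eq_or_ne y 0 with rfl | hy0
        · simpa using (zero_mem (span Mp (K : Set Ω)))
        · have hyM : y ∈ M := hsub y hy
          have hyp : y ^ p ∈ Mp := ⟨y, hyM, rfl⟩
          have hp1 : p - 1 + 1 = p := Nat.succ_pred_eq_of_pos (expChar_pos Ω p)
          have hyp0 : y ^ p ≠ 0 := pow_ne_zero _ hy0
          have hmul1 : (y ^ p)⁻¹ * y ^ (p - 1) * y = 1 := by
            rw [mul_assoc, ← pow_succ, hp1, inv_mul_cancel₀ hyp0]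
          have hinv : y⁻¹ = (y ^ p)⁻¹ * y ^ (p - 1) :=
            (eq_inv_of_mul_eq_one_left hmul1).symm
          rw [hinv]
          exact Submodule.smul_mem _ (⟨(y ^ p)⁻¹, inv_mem hyp⟩ : Mp) (hpow y hy (p - 1)) }
  have hS : M ≤ S := by
    rw [← hgen]
    refine sup_le (fun z hz => subset_span hz) ?_
    intro z hz
    have h4 := Submodule.smul_mem (span Mp (K : Set Ω)) (⟨z, hz⟩ : Mp) (subset_span (one_mem K))
    have h3 : (⟨z, hz⟩ : Mp) • (1 : Ω) = z := mul_one z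
    rw [h3] at h4
    exact h4
  exact hS hx

end Aux

theorem statement1 {Ω : Type*} [Field Ω] (p : ℕ) [ExpChar Ω p]
    (K M L : Subfield Ω) (hKM : K ≤ M) (hML : M ≤ L)
    (hrp : IsRelPerfectExt p K M) :
    IsSepExt p K L ↔ IsSepExt p M L := by
  classical
  open Submodule in
  set q := frobenius Ω p with hq
  constructor
  · -- hard direction: L/K separable → L/M separable
    intro hKL
    intro n b hbM hbind c hcL hsum
    set Kp := K.map q with hKp
    set Mp := M.map q with hMpdef
    set Lp := L.map q with hLpdef
    have hKpK : Kp ≤ K := frobenius_map_le p K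
    have hKpMp : Kp ≤ Mp := by
      intro x hx
      rw [hKp, Subfield.mem_map] at hx
      obtain ⟨y, hy, rfl⟩ := hx
      exact ⟨y, hKM hy, rfl⟩
    have hMpLp : Mp ≤ Lp := by
      intro x hx
      rw [hMpdef, Subfield.mem_map] at hx
      obtain ⟨y, hy, rfl⟩ := hx
      exact ⟨y, hML hy, rfl⟩
    -- Step A/B: each b i lies in the Mp-span of a finite subset of K
    have hspan : ∀ i, b i ∈ span Mp (K : Set Ω) :=
      fun i => mem_span_of_relPerfect p hKM hrp.2 (hbM i)
    choose T hTK hbT using fun i => Submodule.mem_span_finite_of_mem_span (hspan i)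
    let Tall : Finset Ω := Finset.univ.biUnion T
    have hTallK : (Tall : Set Ω) ⊆ (K : Set Ω) := by
      intro x hx
      simp only [Tall, Finset.coe_biUnion, Set.mem_iUnion] at hx
      obtain ⟨i, _, hi⟩ := hx
      exact hTK i hi
    have hbTall : ∀ i, b i ∈ span Mp (Tall : Set Ω) := fun i =>
      Submodule.span_mono
        (Finset.coe_subset.2 (Finset.subset_biUnion_of_mem T (Finset.mem_univ i))) (hbT i)
    -- Step C: basis of the Kp-span of Tall
    let W : Submodule Kp Ω := span Kp (Tall : Set Ω)
    haveI : FiniteDimensional Kp W := FiniteDimensional.span_of_finite Kp (Finset.finite_toSet _)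
    haveI : Module.Free Kp W := Module.Free.of_divisionRing Kp W
    let β : Module.Basis (Fin (Module.finrank Kp W)) Kp W := Module.finBasis Kp W
    set m := Module.finrank Kp W with hm
    let k : Fin m → Ω := fun j => ((β j : W) : Ω)
    have hkK : ∀ j, k j ∈ K := by
      intro j
      exact span_subset_subfield hKpK hTallK (β j).2
    have hkInd : LinearIndependent Kp k :=
      β.linearIndependent.map' W.subtype (Submodule.ker_subtype W)
    -- every element of W is in the Mp-span of range k
    have hWspan : ∀ x : Ω, x ∈ W → x ∈ span Mp (Set.range k) := by
      intro x hx
      have hrepr : (x : Ω) = ∑ j, ((β.repr ⟨x, hx⟩ j : Kp) : Ω) * k j := by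
        have h1 := congrArg (W.subtype) (β.sum_repr ⟨x, hx⟩)
        rw [map_sum] at h1
        have h2 := h1.symm
        simp at h2
        exact h2
      rw [hrepr]
      refine sum_mem fun j _ => ?_
      exact Submodule.smul_mem (span Mp (Set.range k))
        (⟨((β.repr ⟨x, hx⟩ j : Kp) : Ω), hKpMp (β.repr ⟨x, hx⟩ j).2⟩ : Mp)
        (subset_span (Set.mem_range_self j))
    have hbk : ∀ i, b i ∈ span Mp (Set.range k) := by
      intro i
      refine Submodule.span_le.2 ?_ (hbTall i)
      intro x hx
      exact hWspan x (subset_span hx)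
    -- coordinates
    choose a ha using fun i => (mem_span_range_iff_exists_fun Mp).1 (hbk i)
    have ha' : ∀ i, ∑ j, ((a i j : Ω)) * k j = b i := by
      intro i
      exact ha i
    -- Step E: k is independent over Lp
    have hkKp : LinIndepOver Kp k := linIndepOver_of_linearIndependent hkInd
    have hkLp : LinIndepOver Lp k := hKL m k hkK hkKp
    -- Step F: for each j, ∑ i, c i * a i j = 0
    have hd : ∀ j, ∑ i, c i * (a i j : Ω) = 0 := by
      have hsum2 : ∑ j, (∑ i, c i * (a i j : Ω)) * k j = 0 := by
        calc ∑ j, (∑ i, c i * (a i j : Ω)) * k j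
            = ∑ j, ∑ i, c i * ((a i j : Ω) * k j) := by
              refine Finset.sum_congr rfl fun j _ => ?_
              rw [Finset.sum_mul]
              exact Finset.sum_congr rfl fun i _ => by ring
          _ = ∑ i, ∑ j, c i * ((a i j : Ω) * k j) := Finset.sum_comm
          _ = ∑ i, c i * b i := by
              refine Finset.sum_congr rfl fun i _ => ?_
              rw [← ha' i, Finset.mul_sum]
          _ = 0 := hsum
      exact hkLp _ (fun j => sum_mem fun i _ => mul_mem (hcL i) (hMpLp (a i j).2)) hsum2
    -- Step G/H: matrix argument
    set C : Matrix (Fin m) (Fin n) Mp := Matrix.of fun j i => a i j with hC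
    have hker : LinearMap.ker (Matrix.toLin' C) = ⊥ := by
      rw [LinearMap.ker_eq_bot']
      intro x hx
      have hx' : ∀ j, ∑ i, (x i : Ω) * (a i j : Ω) = 0 := by
        intro j
        have h1 : (Matrix.toLin' C x) j = 0 := by rw [hx]; rfl
        rw [Matrix.toLin'_apply] at h1
        have h2 := congrArg (Mp.subtype) h1
        simp only [Matrix.mulVec, dotProduct, map_sum, map_mul, map_zero] at h2
        rw [← h2]
        exact Finset.sum_congr rfl fun i _ => by rw [mul_comm]; rfl
      have hxb : ∑ i, (x i : Ω) * b i = 0 := by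
        calc ∑ i, (x i : Ω) * b i
            = ∑ i, ∑ j, (x i : Ω) * ((a i j : Ω) * k j) := by
              refine Finset.sum_congr rfl fun i _ => ?_
              rw [← ha' i, Finset.mul_sum]
          _ = ∑ j, ∑ i, (x i : Ω) * ((a i j : Ω) * k j) := Finset.sum_comm
          _ = ∑ j, (∑ i, (x i : Ω) * (a i j : Ω)) * k j := by
              refine Finset.sum_congr rfl fun j _ => ?_
              rw [Finset.sum_mul]
              exact Finset.sum_congr rfl fun i _ => by ring
          _ = 0 := by simp [hx']
      have := hbind (fun i => (x i : Ω)) (fun i => (x i).2) hxb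
      funext i
      exact Subtype.ext (this i)
    obtain ⟨g, hg⟩ := (Matrix.toLin' C).exists_leftInverse_of_injective hker
    set B : Matrix (Fin n) (Fin m) Mp := LinearMap.toMatrix' g with hB
    have hBC : B * C = 1 := by
      have h1 := congrArg LinearMap.toMatrix' hg
      rwa [LinearMap.toMatrix'_comp, LinearMap.toMatrix'_toLin', LinearMap.toMatrix'_id] at h1
    have hδ : ∀ i i', ∑ j, (B i j : Ω) * (a i' j : Ω) =
        if i = i' then (1 : Ω) else 0 := by
      intro i i'
      calc ∑ j, (B i j : Ω) * (a i' j : Ω)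
          = (((B * C) i i' : Mp) : Ω) := by
            rw [Matrix.mul_apply]
            push_cast
            rfl
        _ = (((1 : Matrix (Fin n) (Fin n) Mp) i i' : Mp) : Ω) := by rw [hBC]
        _ = if i = i' then (1 : Ω) else 0 := by
            rw [Matrix.one_apply]
            split <;> simp
    -- final computation
    intro i
    calc c i = ∑ i', c i' * (if i = i' then (1 : Ω) else 0) := by
          simp [Finset.sum_ite_eq, mul_ite]
      _ = ∑ i', c i' * ∑ j, (B i j : Ω) * (a i' j : Ω) := by
          refine Finset.sum_congr rfl fun i' _ => ?_
          rw [hδ]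
      _ = ∑ i', ∑ j, (B i j : Ω) * (c i' * (a i' j : Ω)) := by
          refine Finset.sum_congr rfl fun i' _ => ?_
          rw [Finset.mul_sum]
          exact Finset.sum_congr rfl fun j _ => by ring
      _ = ∑ j, ∑ i', (B i j : Ω) * (c i' * (a i' j : Ω)) := Finset.sum_comm
      _ = ∑ j, (B i j : Ω) * ∑ i', c i' * (a i' j : Ω) := by
          refine Finset.sum_congr rfl fun j _ => ?_
          rw [Finset.mul_sum]
      _ = 0 := by simp [hd]
  · -- easy direction: L/M separable → L/K separable
    intro hMLsep
    intro n b hbK hbind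
    have h1 : LinIndepOver (M.map q) b := hrp.1 n b hbK hbind
    exact hMLsep n b (fun i => hKM (hbK i)) h1
end

section
/- Let K ⊆ M ⊆ L be a tower of difference fields (i.e., M, K are difference subfields of L). Then: (1) if M/K and L/M are transformally separable, then L/K is transformally separable; (2) if L/K is transformally separable, then M/K is transformally separable; (3) L/K is transformally separable if and only if for every finite tuple a of elements of L the difference subfield of L generated by K and a is transformally separable over K; (4) if Ω is a difference field containing L, K₀ is a difference subfield of Ω containing K which is linearly disjoint from L over K, and L₀ is the difference subfield of Ω generated by L and K₀, then L/K is transformally separable if and only if L₀/K₀ is transformally separable. -/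
/-- The extension `L/K` of difference subfields of `(Ω, σ)` is transformally separable:
`K` and `σ(L)` are linearly disjoint over `σ(K)`. -/
def TransSepOver {Ω : Type*} [Field Ω] (σ : Ω →+* Ω) (K L : Subfield Ω) : Prop :=
  LinDisjOver (K.map σ) K (L.map σ)

/-- The difference subfield generated by a difference subfield `K` and a tuple `a`. -/
def DiffGen {Ω : Type*} [Field Ω] (σ : Ω →+* Ω) (K : Subfield Ω)
    {d : ℕ} (a : Fin d → Ω) : Subfield Ω :=
  K ⊔ Subfield.closure {y | ∃ (i : Fin d) (n : ℕ), y = (⇑σ)^[n] (a i)}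


/-! Everything follows from three properties of linear disjointness of subfields: it is
symmetric, it is preserved by the injective endomorphism `σ`, and it satisfies a tower law:
if `X` and `D` are linearly disjoint over `F` and `F ≤ E ≤ D`, then so are `X ⊔ E` and `D`
over `E`. For the tower law, after clearing a common denominator an `E`-independent tuple
of `X ⊔ E` becomes the tuple of rows of an `E`-matrix applied to an `F`-independent tuple of
`X`; that tuple stays `D`-independent, and a matrix over `E` with `E`-independent rows has
`Ω`-independent rows. Base change (4) is then a chase between `K`, `K₀`, `σ(K)`, `σ(K₀)`
and `σ(L)` using these rules. -/

section LinearAlgebra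

variable {Ω : Type*} [Field Ω]

def InSpanOver (A : Subfield Ω) {m : ℕ} (u : Fin m → Ω) (w : Ω) : Prop :=
  ∃ c : Fin m → Ω, (∀ j, c j ∈ A) ∧ w = ∑ j, c j * u j

theorem inSpanOver_iff_mem_span {A : Subfield Ω} {m : ℕ} {u : Fin m → Ω} {w : Ω} :
    InSpanOver A u w ↔ w ∈ Submodule.span A (Set.range u) := by
  rw [Submodule.mem_span_range_iff_exists_fun]
  constructor
  · rintro ⟨c, hc, rfl⟩
    exact ⟨fun j => ⟨c j, hc j⟩, rfl⟩
  · rintro ⟨c, rfl⟩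
    exact ⟨fun j => c j, fun j => (c j).2, rfl⟩

theorem linIndepOver_iff_linearIndependent {A : Subfield Ω} {n : ℕ} {b : Fin n → Ω} :
    LinIndepOver A b ↔ LinearIndependent A b := by
  rw [Fintype.linearIndependent_iff]
  constructor
  · intro h g hg i
    exact Subtype.ext (h (fun i => g i) (fun i => (g i).2) hg i)
  · intro h c hc hs i
    exact congrArg Subtype.val (h (fun i => ⟨c i, hc i⟩) hs i)

theorem LinIndepOver.mono {A A' : Subfield Ω} {n : ℕ} {b : Fin n → Ω} (h : A' ≤ A)
    (hb : LinIndepOver A b) : LinIndepOver A' b :=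
  fun c hc => hb c fun i => h (hc i)

theorem linIndepOver_mul_right_iff {A : Subfield Ω} {n : ℕ} {b : Fin n → Ω} {q : Ω}
    (hq : q ≠ 0) : LinIndepOver A (fun i => b i * q) ↔ LinIndepOver A b := by
  have hsum : ∀ c : Fin n → Ω, ∑ i, c i * (b i * q) = (∑ i, c i * b i) * q := fun c => by
    simp_rw [Finset.sum_mul, mul_assoc]
  simp only [LinIndepOver, hsum, mul_eq_zero, hq, or_false]

theorem sum_mul_sum_mul_comm {n m : ℕ} (a : Fin n → Ω) (e : Fin n → Fin m → Ω)
    (u : Fin m → Ω) : ∑ i, a i * ∑ j, e i j * u j = ∑ j, (∑ i, a i * e i j) * u j := by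
  simp_rw [Finset.mul_sum, Finset.sum_mul, mul_assoc]
  exact Finset.sum_comm

theorem InSpanOver.trans {A B : Subfield Ω} (hAB : A ≤ B) {m p : ℕ} {u : Fin m → Ω}
    {x : Fin p → Ω} (hx : ∀ k, InSpanOver A u (x k)) {w : Ω} (hw : InSpanOver B x w) :
    InSpanOver B u w := by
  obtain ⟨c, hc, rfl⟩ := hw
  choose f hf hrep using hx
  refine ⟨fun j => ∑ k, c k * f k j, fun j =>
    Subfield.sum_mem _ fun k _ => B.mul_mem (hc k) (hAB (hf k j)), ?_⟩
  simp_rw [hrep, sum_mul_sum_mul_comm]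

theorem exists_linIndepOver_inSpanOver (A B : Subfield Ω) {n : ℕ} (y : Fin n → Ω)
    (hy : ∀ i, y i ∈ B) : ∃ (m : ℕ) (u : Fin m → Ω),
      (∀ j, u j ∈ B) ∧ LinIndepOver A u ∧ ∀ i, InSpanOver A u (y i) := by
  obtain ⟨s, hsy, hspan, hli⟩ := exists_linearIndependent A (Set.range y)
  obtain ⟨m, u, hu, rfl⟩ := ((Set.finite_range y).subset hsy).fin_param
  refine ⟨m, u, fun j => ?_, ?_, fun i => ?_⟩
  · obtain ⟨i, hi⟩ := hsy ⟨j, rfl⟩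
    exact hi ▸ hy i
  · exact linIndepOver_iff_linearIndependent.mpr ((linearIndepOn_id_range_iff hu).mp hli)
  · rw [inSpanOver_iff_mem_span, hspan]
    exact Submodule.subset_span ⟨i, rfl⟩

theorem rows_linIndep_of_linIndepOver (E : Subfield Ω) {n m : ℕ} (e : Fin n → Fin m → Ω)
    (he : ∀ i j, e i j ∈ E)
    (hrows : ∀ c : Fin n → Ω, (∀ i, c i ∈ E) → (∀ j, ∑ i, c i * e i j = 0) → ∀ i, c i = 0)
    (d : Fin n → Ω) (hd : ∀ j, ∑ i, d i * e i j = 0) : ∀ i, d i = 0 := by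
  -- Expanding `d` over an `E`-independent tuple `w`, each coordinate solves the system over `E`.
  obtain ⟨k, w, -, hw, hdw⟩ := exists_linIndepOver_inSpanOver E ⊤ d fun _ => trivial
  choose a ha hda using hdw
  have hcoeff : ∀ j l, ∑ i, a i l * e i j = 0 := by
    intro j
    refine hw _ (fun l => Subfield.sum_mem _ fun i _ => E.mul_mem (ha i l) (he i j)) ?_
    calc ∑ l, (∑ i, a i l * e i j) * w l = ∑ i, e i j * ∑ l, a i l * w l := by
          simp_rw [sum_mul_sum_mul_comm, mul_comm (e _ j)]
      _ = 0 := by simp_rw [← hda, mul_comm (e _ j), hd j]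
  intro i
  rw [hda i, Finset.sum_eq_zero fun l _ => by
    rw [hrows (fun i => a i l) (fun i => ha i l) (hcoeff · l) i, zero_mul]]

theorem LinDisjOver.mono_left {A B B' C : Subfield Ω} (h : B' ≤ B)
    (hd : LinDisjOver A B C) : LinDisjOver A B' C :=
  fun n b hb => hd n b fun i => h (hb i)

theorem LinDisjOver.mono_right {A B C C' : Subfield Ω} (h : C' ≤ C)
    (hd : LinDisjOver A B C) : LinDisjOver A B C' :=
  fun n b hb hbI => (hd n b hb hbI).mono h

theorem LinDisjOver.symm {A B C : Subfield Ω} (hAC : A ≤ C) (h : LinDisjOver A B C) :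
    LinDisjOver A C B := by
  intro n y hy hyI x hx hsum
  obtain ⟨m, u, huB, huI, hxu⟩ := exists_linIndepOver_inSpanOver A B x hx
  choose c hc hxc using hxu
  have hcoeff : ∀ j, ∑ i, y i * c i j = 0 := by
    refine h m u huB huI _
      (fun j => Subfield.sum_mem _ fun i _ => C.mul_mem (hy i) (hAC (hc i j))) ?_
    rw [← sum_mul_sum_mul_comm, ← hsum]
    simp_rw [hxc, mul_comm (y _)]
  have hc0 : ∀ i j, c i j = 0 := fun i j =>
    hyI (c · j) (hc · j) (by simpa only [mul_comm] using hcoeff j) i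
  intro i
  simp [hxc i, hc0 i]

theorem LinDisjOver.map {A B C : Subfield Ω} (σ : Ω →+* Ω) (h : LinDisjOver A B C) :
    LinDisjOver (A.map σ) (B.map σ) (C.map σ) := by
  intro n b' hb' hb'I
  choose b hbB hbb' using fun i => Subfield.mem_map.mp (hb' i)
  have hmap : ∀ c : Fin n → Ω, ∑ i, σ (c i) * b' i = σ (∑ i, c i * b i) := fun c => by
    simp [← hbb']
  have hbA : LinIndepOver A b := fun c hc hs i =>
    σ.injective <| by
      rw [hb'I (fun i => σ (c i)) (fun i => ⟨c i, hc i, rfl⟩) (by rw [hmap, hs, map_zero]) i,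
        map_zero]
  intro c' hc' hs' i
  choose c hcC hcc' using fun i => Subfield.mem_map.mp (hc' i)
  have hs : ∑ i, c i * b i = 0 := σ.injective <| by
    rw [← hmap, map_zero, ← hs']
    simp_rw [hcc']
  rw [← hcc' i, h n b hbB hbA c hcC hs i, map_zero]

theorem LinDisjOver.trans {F E D X : Subfield Ω} (h₁ : LinDisjOver F X E)
    (h₂ : LinDisjOver E (X ⊔ E) D) : LinDisjOver F X D :=
  fun n b hb hbI => h₂ n b (fun i => le_sup_left (a := X) (hb i)) (h₁ n b hb hbI)

theorem exists_inSpanOver_of_mem_closure (E X : Subfield Ω) {n : ℕ} (z : Fin n → Ω)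
    (hz : ∀ i, z i ∈ Subring.closure ((X : Set Ω) ∪ E)) :
    ∃ (m : ℕ) (x : Fin m → Ω), (∀ j, x j ∈ X) ∧ ∀ i, InSpanOver E x (z i) := by
  classical
  have hclosure : Subring.closure ((X : Set Ω) ∪ E) ≤ (Algebra.adjoin E (X : Set Ω)).toSubring :=
    Subring.closure_le.mpr <| Set.union_subset Algebra.subset_adjoin
      fun x hx => Subalgebra.algebraMap_mem _ (⟨x, hx⟩ : E)
  have hadjoin : Subalgebra.toSubmodule (Algebra.adjoin E (X : Set Ω)) ≤
      Submodule.span E (X : Set Ω) :=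
    (Algebra.adjoin_toSubmodule_le _).mpr fun x hx =>
      Submodule.subset_span ((Submonoid.closure_le (S := X.toSubmonoid)).mpr subset_rfl hx)
  obtain ⟨s, hsX, hzs⟩ := Submodule.subset_span_finite_of_subset_span (R := E)
    (s := (X : Set Ω)) (t := Finset.univ.image z) (by
      rw [Finset.coe_image, Finset.coe_univ, Set.image_univ, Set.range_subset_iff]
      exact fun i => hadjoin (hclosure (hz i)))
  obtain ⟨m, x, -, hxs⟩ := s.finite_toSet.fin_param
  refine ⟨m, x, fun j => hsX (hxs ▸ ⟨j, rfl⟩), fun i => ?_⟩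
  rw [inSpanOver_iff_mem_span, hxs]
  exact hzs (by simp)

theorem exists_mul_mem_closure_of_mem_sup (X E : Subfield Ω) {n : ℕ} (z : Fin n → Ω)
    (hz : ∀ i, z i ∈ X ⊔ E) :
    ∃ q ≠ 0, ∀ i, z i * q ∈ Subring.closure ((X : Set Ω) ∪ E) := by
  classical
  have hfrac : ∀ i, ∃ p ∈ Subring.closure ((X : Set Ω) ∪ E),
      ∃ q ∈ Subring.closure ((X : Set Ω) ∪ E), q ≠ 0 ∧ z i * q = p := by
    intro i
    have hi := hz i
    rw [← Subfield.closure_eq X, ← Subfield.closure_eq E, ← Subfield.closure_union,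
      Subfield.mem_closure_iff] at hi
    obtain ⟨p, hp, q, hq, hpq⟩ := hi
    rw [← hpq]
    rcases eq_or_ne q 0 with rfl | hq0
    · exact ⟨0, zero_mem _, 1, one_mem _, one_ne_zero, by simp⟩
    · exact ⟨p, hp, q, hq, hq0, div_mul_cancel₀ p hq0⟩
  choose p hp q hq hq0 hzq using hfrac
  refine ⟨∏ i, q i, Finset.prod_ne_zero_iff.mpr fun i _ => hq0 i, fun i => ?_⟩
  rw [← Finset.mul_prod_erase _ q (Finset.mem_univ i), ← mul_assoc, hzq]
  exact mul_mem (hp i) (prod_mem fun k _ => hq k)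

theorem LinDisjOver.linIndepOver_of_mem_closure {F E D X : Subfield Ω} (hFE : F ≤ E)
    (hED : E ≤ D) (h : LinDisjOver F X D) {n : ℕ} (z : Fin n → Ω)
    (hz : ∀ i, z i ∈ Subring.closure ((X : Set Ω) ∪ E)) (hzE : LinIndepOver E z) :
    LinIndepOver D z := by
  obtain ⟨p, x, hxX, hzx⟩ := exists_inSpanOver_of_mem_closure E X z hz
  obtain ⟨m, u, huX, huF, hxu⟩ := exists_linIndepOver_inSpanOver F X x hxX
  choose e he hze using fun i => (hzx i).trans hFE hxu
  have hcomb : ∀ c : Fin n → Ω, ∑ i, c i * z i = ∑ j, (∑ i, c i * e i j) * u j := fun c => by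
    simp_rw [hze, sum_mul_sum_mul_comm]
  intro d hdD hdz
  refine rows_linIndep_of_linIndepOver E e he (fun c hc hce => hzE c hc ?_) d fun j => ?_
  · simp [hcomb, hce]
  · exact h m u huX huF _
      (fun j => Subfield.sum_mem _ fun i _ => D.mul_mem (hdD i) (hED (he i j))) (hcomb d ▸ hdz) j

theorem LinDisjOver.sup {F E D X : Subfield Ω} (hFE : F ≤ E) (hED : E ≤ D)
    (h : LinDisjOver F X D) : LinDisjOver E (X ⊔ E) D := by
  intro n z hz hzE
  obtain ⟨q, hq, hzq⟩ := exists_mul_mem_closure_of_mem_sup X E z hz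
  rw [← linIndepOver_mul_right_iff hq] at hzE ⊢
  exact h.linIndepOver_of_mem_closure hFE hED _ hzq hzE

end LinearAlgebra

section DifferenceFields

variable {Ω : Type*} [Field Ω] {σ : Ω →+* Ω}

theorem Subfield.map_le_self {L : Subfield Ω} (hL : ∀ x ∈ L, σ x ∈ L) : L.map σ ≤ L :=
  Subfield.map_le_iff_le_comap.mpr hL

theorem Subfield.map_mono {L L' : Subfield Ω} (h : L ≤ L') : L.map σ ≤ L'.map σ :=
  (Subfield.gc_map_comap σ).monotone_l h

theorem diffGen_le {K L : Subfield Ω} (hKL : K ≤ L) (hL : ∀ x ∈ L, σ x ∈ L) {d : ℕ}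
    {a : Fin d → Ω} (ha : ∀ i, a i ∈ L) : DiffGen σ K a ≤ L :=
  sup_le hKL <| Subfield.closure_le.mpr <| by
    rintro _ ⟨i, n, rfl⟩
    exact Set.MapsTo.iterate hL n (ha i)

theorem mem_diffGen (K : Subfield Ω) {d : ℕ} (a : Fin d → Ω) (i : Fin d) :
    a i ∈ DiffGen σ K a :=
  le_sup_right (a := K) (Subfield.subset_closure ⟨i, 0, rfl⟩)

namespace TransSepOver

theorem trans {K M L : Subfield Ω} (hKM : K ≤ M) (h₁ : TransSepOver σ K M)
    (h₂ : TransSepOver σ M L) : TransSepOver σ K L :=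
  fun n b hb hbI => h₂ n b (fun i => hKM (hb i)) (h₁ n b hb hbI)

theorem mono {K M L : Subfield Ω} (hML : M ≤ L) (h : TransSepOver σ K L) :
    TransSepOver σ K M :=
  LinDisjOver.mono_right (Subfield.map_mono hML) h

theorem sup_of_linDisjOver {K L K₀ : Subfield Ω} (hKL : K ≤ L) (hKK₀ : K ≤ K₀)
    (hL : ∀ x ∈ L, σ x ∈ L) (hK₀ : ∀ x ∈ K₀, σ x ∈ K₀) (hdisj : LinDisjOver K K₀ L)
    (h : TransSepOver σ K L) : TransSepOver σ K₀ (L ⊔ K₀) := by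
  have h₁ : LinDisjOver (K.map σ) (L.map σ) K := h.symm (Subfield.map_mono hKL)
  have h₂ : LinDisjOver K (L.map σ ⊔ K) K₀ :=
    (hdisj.symm hKL).mono_left (sup_le (Subfield.map_le_self hL) hKL)
  have h₃ : LinDisjOver (K₀.map σ) (L.map σ ⊔ K₀.map σ) K₀ :=
    (h₁.trans h₂).sup (Subfield.map_mono hKK₀) (Subfield.map_le_self hK₀)
  unfold TransSepOver
  rw [Subfield.map_sup]
  exact h₃.symm (Subfield.map_le_self hK₀)

theorem of_sup_of_linDisjOver {K L K₀ : Subfield Ω} (hKL : K ≤ L) (hKK₀ : K ≤ K₀)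
    (hK : ∀ x ∈ K, σ x ∈ K) (hdisj : LinDisjOver K K₀ L) (h : TransSepOver σ K₀ (L ⊔ K₀)) :
    TransSepOver σ K L := by
  have h₁ : LinDisjOver (K₀.map σ) (L.map σ ⊔ K₀.map σ) K₀ := by
    rw [← Subfield.map_sup]
    exact h.symm (Subfield.map_mono le_sup_right)
  have h₂ : LinDisjOver (K.map σ) (L.map σ) (K₀.map σ) := (hdisj.symm hKL).map σ
  exact ((h₂.trans h₁).mono_right hKK₀).symm (Subfield.map_le_self hK)

end TransSepOver

theorem transSepOver_iff_forall_diffGen {K L : Subfield Ω} (hKL : K ≤ L)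
    (hL : ∀ x ∈ L, σ x ∈ L) : TransSepOver σ K L ↔
      ∀ (d : ℕ) (a : Fin d → Ω), (∀ i, a i ∈ L) → TransSepOver σ K (DiffGen σ K a) := by
  refine ⟨fun h d a ha => h.mono (diffGen_le hKL hL ha), fun h n b hb hbI c hc hbc => ?_⟩
  choose x hxL hxc using fun i => Subfield.mem_map.mp (hc i)
  exact h n x hxL n b hb hbI c (fun i => ⟨x i, mem_diffGen K x i, hxc i⟩) hbc

end DifferenceFields

theorem statement2_general {Ω : Type*} [Field Ω] (σ : Ω →+* Ω)
    (K M L : Subfield Ω)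
    (hKσ : ∀ x ∈ K, σ x ∈ K) (hLσ : ∀ x ∈ L, σ x ∈ L)
    (hKM : K ≤ M) (hML : M ≤ L) :
    -- (1) composition
    (TransSepOver σ K M → TransSepOver σ M L → TransSepOver σ K L) ∧
    -- (2) downward closure
    (TransSepOver σ K L → TransSepOver σ K M) ∧
    -- (3) finite character
    (TransSepOver σ K L ↔
      ∀ (d : ℕ) (a : Fin d → Ω), (∀ i, a i ∈ L) → TransSepOver σ K (DiffGen σ K a)) ∧
    -- (4) invariance under base extension
    (∀ K₀ : Subfield Ω, (∀ x ∈ K₀, σ x ∈ K₀) → K ≤ K₀ → LinDisjOver K K₀ L →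
      (TransSepOver σ K L ↔ TransSepOver σ K₀ (L ⊔ K₀))) := by
  have hKL : K ≤ L := hKM.trans hML
  refine ⟨fun h₁ h₂ => h₁.trans hKM h₂, fun h => h.mono hML,
    transSepOver_iff_forall_diffGen hKL hLσ, fun K₀ hK₀ hKK₀ hdisj => ⟨?_, ?_⟩⟩
  · exact TransSepOver.sup_of_linDisjOver hKL hKK₀ hLσ hK₀ hdisj
  · exact TransSepOver.of_sup_of_linDisjOver hKL hKK₀ hKσ hdisj

theorem statement2 {Ω : Type*} [Field Ω] (σ : Ω →+* Ω)
    (K M L : Subfield Ω)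
    (hKσ : ∀ x ∈ K, σ x ∈ K) (hMσ : ∀ x ∈ M, σ x ∈ M) (hLσ : ∀ x ∈ L, σ x ∈ L)
    (hKM : K ≤ M) (hML : M ≤ L) :
    -- (1) composition
    (TransSepOver σ K M → TransSepOver σ M L → TransSepOver σ K L) ∧
    -- (2) downward closure
    (TransSepOver σ K L → TransSepOver σ K M) ∧
    -- (3) finite character
    (TransSepOver σ K L ↔
      ∀ (d : ℕ) (a : Fin d → Ω), (∀ i, a i ∈ L) → TransSepOver σ K (DiffGen σ K a)) ∧
    -- (4) invariance under base extension
    (∀ K₀ : Subfield Ω, (∀ x ∈ K₀, σ x ∈ K₀) → K ≤ K₀ → LinDisjOver K K₀ L →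
      (TransSepOver σ K L ↔ TransSepOver σ K₀ (L ⊔ K₀))) :=
  statement2_general σ K M L hKσ hLσ hKM hML
end

section
/- Let K be a difference field of characteristic exponent p. Then there exists an extension of difference fields K ⊆ K̃ such that K̃ is a purely inseparable algebraic field extension of K, K̃ is closed under twists, and for every extension L of K in the category of difference fields which is closed under twists there is a unique difference-field embedding of K̃ into L over K (i.e., a ring homomorphism commuting with σ and fixing K pointwise). -/
/-!
Let `P` be a perfect closure of `K`. Since `P / K` is `p`-radical, `σ` extends uniquely to an
endomorphism `σ̃` of `P`, and `K̃` is the compositum of `K` and `σ̃(P)` inside `P`: it is stable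
under `σ̃`, purely inseparable over `K`, and closed under twists because `σ̃(P)` is perfect.
Embeddings out of a `p`-radical extension are determined by their restriction to `K`, which gives
uniqueness and compatibility with `σ`. For existence, lift `j` to a map from `P` to the perfect
field `L̄ = AlgebraicClosure L`; each `σ̃ a` is sent to the unique `p^n`-th root in `L̄` of
`j (σ k) = τ (j k)` (where `a ^ p ^ n = k`), which lies in `L` as `L` is closed under twists.
-/

universe u v

/-- A difference field: a field equipped with a (necessarily injective) ring
endomorphism `sg`. -/
structure DiffField : Type (u + 1) where
  carrier : Type u
  [fld : Field carrier]
  sg : carrier →+* carrier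

attribute [instance] DiffField.fld

/-- A difference field of characteristic exponent `p` is closed under twists if for every
`x` and every `n` the element `σ x` has a `p^n`-th root. -/
def ClosedUnderTwists (p : ℕ) {F : Type*} [Field F] (σ : F →+* F) : Prop :=
  ∀ (x : F) (n : ℕ), ∃ y : F, y ^ p ^ n = σ x

theorem IsPRadical.of_pow_mem {K L : Type*} [Field K] [Field L] (i : K →+* L) (p : ℕ)
    (h : ∀ x : L, ∃ (n : ℕ) (y : K), i y = x ^ p ^ n) : IsPRadical i p where
  pow_mem' := h
  ker_le' := (RingHom.injective_iff_ker_eq_bot i).1 i.injective ▸ bot_le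

theorem RingHom.exists_comp_eq_of_forall_mem_fieldRange {A L M : Type*} [Ring A] [Field L]
    [Field M] (g : L →+* M) (f : A →+* M) (h : ∀ x, f x ∈ g.fieldRange) :
    ∃ e : A →+* L, g.comp e = f :=
  ⟨g.rangeRestrictFieldEquiv.symm.toRingHom.comp (f.codRestrict _ h),
    RingHom.ext fun _ => g.rangeRestrictFieldEquiv_apply_symm_apply _⟩

section TwistClosure

variable {K P : Type*} [Field K] [Field P] (p : ℕ) [ExpChar K p] [ExpChar P p] [PerfectRing P p]
  (i : K →+* P) [IsPRadical i p] (σ : K →+* K)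

noncomputable def liftEndo : P →+* P :=
  PerfectRing.lift i (i.comp σ) p

theorem liftEndo_comp : (liftEndo p i σ).comp i = i.comp σ :=
  PerfectRing.lift_comp i (i.comp σ) p

noncomputable def twistClosure : Subfield P :=
  i.fieldRange ⊔ (liftEndo p i σ).fieldRange

theorem liftEndo_mem_twistClosure (a : P) : liftEndo p i σ a ∈ twistClosure p i σ :=
  le_sup_right (a := i.fieldRange) (RingHom.mem_fieldRange_self _ a)

namespace twistClosure

noncomputable def endo : twistClosure p i σ →+* twistClosure p i σ :=
  ((liftEndo p i σ).comp (twistClosure p i σ).subtype).codRestrict _ fun x =>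
    liftEndo_mem_twistClosure p i σ x

noncomputable def incl : K →+* twistClosure p i σ :=
  i.codRestrict _ fun x => le_sup_left (b := (liftEndo p i σ).fieldRange) (i.mem_fieldRange_self x)

theorem incl_comp_eq_endo_comp_incl : (incl p i σ).comp σ = (endo p i σ).comp (incl p i σ) :=
  RingHom.ext fun x => Subtype.ext (RingHom.congr_fun (liftEndo_comp p i σ) x).symm

instance isPRadical_incl : IsPRadical (incl p i σ) p :=
  .of_pow_mem _ p fun x => by
    obtain ⟨n, y, hy⟩ := IsPRadical.pow_mem i p (x : P)
    exact ⟨n, y, Subtype.ext hy⟩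

theorem closedUnderTwists_endo : ClosedUnderTwists p (endo p i σ) := fun x n =>
  ⟨⟨_, liftEndo_mem_twistClosure p i σ ((iterateFrobeniusEquiv P p n).symm x)⟩, Subtype.ext <| by
    change liftEndo p i σ _ ^ p ^ n = liftEndo p i σ x
    rw [← map_pow, ← iterateFrobeniusEquiv_def, RingEquiv.apply_symm_apply]⟩

theorem exists_comp_incl_eq {L : Type*} [Field L] [ExpChar L p] (τ : L →+* L) (j : K →+* L)
    (hj : j.comp σ = τ.comp j) (hτ : ClosedUnderTwists p τ) :
    ∃ e : twistClosure p i σ →+* L, e.comp (incl p i σ) = j := by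
  let g := algebraMap L (AlgebraicClosure L)
  have : ExpChar (AlgebraicClosure L) p := expChar_of_injective_algebraMap g.injective p
  let f := PerfectRing.lift i (g.comp j) p
  have hf : f.comp i = g.comp j := PerfectRing.lift_comp i (g.comp j) p
  have hle : twistClosure p i σ ≤ g.fieldRange.comap f := by
    refine sup_le ?_ ?_
    · rintro _ ⟨k, rfl⟩
      exact RingHom.mem_fieldRange.2 ⟨j k, (RingHom.congr_fun hf k).symm⟩
    · rintro _ ⟨a, rfl⟩
      obtain ⟨n, k, hk⟩ := IsPRadical.pow_mem i p a
      obtain ⟨y, hy⟩ := hτ (j k) n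
      refine RingHom.mem_fieldRange.2 ⟨y, iterateFrobenius_inj _ p n ?_⟩
      simp only [iterateFrobenius_def]
      calc g y ^ p ^ n = g (τ (j k)) := by rw [← map_pow, hy]
        _ = f (i (σ k)) := by rw [← RingHom.comp_apply τ, ← hj, ← RingHom.comp_apply f, hf]; rfl
        _ = f (liftEndo p i σ a) ^ p ^ n := by
          rw [← map_pow, ← map_pow, ← hk, ← RingHom.comp_apply (liftEndo p i σ), liftEndo_comp]
          rfl
  obtain ⟨e, he⟩ := g.exists_comp_eq_of_forall_mem_fieldRange
    (f.comp (twistClosure p i σ).subtype) fun x => hle x.2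
  refine ⟨e, (RingHom.cancel_left g.injective).1 ?_⟩
  rw [← RingHom.comp_assoc, he, ← hf]
  rfl

theorem existsUnique_lift {L : Type*} [Field L] (τ : L →+* L) (j : K →+* L)
    (hj : ∀ x, j (σ x) = τ (j x)) (hτ : ClosedUnderTwists p τ) :
    ∃! e : twistClosure p i σ →+* L,
      (∀ x, e (endo p i σ x) = τ (e x)) ∧ e.comp (incl p i σ) = j := by
  have : ExpChar L p := expChar_of_injective_ringHom j.injective p
  have restrict_injective := IsPRadical.injective_comp L (incl p i σ) p
  obtain ⟨e, he⟩ := exists_comp_incl_eq p i σ τ j (RingHom.ext hj) hτ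
  have he_endo : (e.comp (endo p i σ)).comp (incl p i σ) = (τ.comp e).comp (incl p i σ) := by
    rw [RingHom.comp_assoc, ← incl_comp_eq_endo_comp_incl, ← RingHom.comp_assoc, he,
      RingHom.comp_assoc, he]
    exact RingHom.ext hj
  exact ⟨e, ⟨fun x => RingHom.congr_fun (restrict_injective he_endo) x, he⟩,
    fun e' he' => restrict_injective (he'.2.trans he.symm)⟩

end twistClosure

end TwistClosure

theorem statement3 (p : ℕ) (K : DiffField.{u}) [ExpChar K.carrier p] :
    ∃ (Kt : DiffField.{u}) (ι : K.carrier →+* Kt.carrier),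
      -- ι is an embedding of difference fields
      (∀ x, ι (K.sg x) = Kt.sg (ι x)) ∧
      -- K̃ is a purely inseparable algebraic extension of K
      (∀ x : Kt.carrier, ∃ n : ℕ, x ^ p ^ n ∈ Set.range ι) ∧
      -- K̃ is closed under twists
      ClosedUnderTwists p Kt.sg ∧
      -- universal property: unique difference-field embedding over K into any
      -- difference field extension of K closed under twists
      (∀ (L : DiffField.{v}) (j : K.carrier →+* L.carrier),
        (∀ x, j (K.sg x) = L.sg (j x)) → ClosedUnderTwists p L.sg →
        ∃! e : Kt.carrier →+* L.carrier,
          (∀ x, e (Kt.sg x) = L.sg (e x)) ∧ e.comp ι = j) := by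
  let Ω := AlgebraicClosure K.carrier
  have : ExpChar Ω p := expChar_of_injective_algebraMap (algebraMap K.carrier Ω).injective p
  let i := algebraMap K.carrier (perfectClosure K.carrier Ω)
  refine ⟨⟨twistClosure p i K.sg, twistClosure.endo p i K.sg⟩, twistClosure.incl p i K.sg,
    fun x => RingHom.congr_fun (twistClosure.incl_comp_eq_endo_comp_incl p i K.sg) x,
    fun x => ?_, twistClosure.closedUnderTwists_endo p i K.sg,
    fun L j hj hτ => twistClosure.existsUnique_lift p i K.sg L.sg j hj hτ⟩
  obtain ⟨n, y, hy⟩ := IsPRadical.pow_mem (twistClosure.incl p i K.sg) p x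
  exact ⟨n, y, hy⟩
end

section
/- Let K be a difference field closed under twists and let L be a purely inseparable algebraic field extension of K. Then there is a unique ring endomorphism σ_L of L extending σ, and the difference field (L, σ_L) is again closed under twists. -/
theorem eq_of_pow_expChar_pow_eq {R : Type*} [CommRing R] [IsReduced R] (p : ℕ) [ExpChar R p]
    {x y : R} (n : ℕ) (h : x ^ p ^ n = y ^ p ^ n) : x = y :=
  iterateFrobenius_inj R p n h

namespace IsPRadical

variable {K L M : Type*} [CommRing K] [CommRing L] [CommRing M] (i : K →+* L) (p : ℕ)
  [IsPRadical i p]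

theorem exists_common_pow_eq (x y : L) :
    ∃ (n : ℕ) (a b : K), i a = x ^ p ^ n ∧ i b = y ^ p ^ n := by
  obtain ⟨n, a, ha⟩ := IsPRadical.pow_mem i p x
  obtain ⟨m, b, hb⟩ := IsPRadical.pow_mem i p y
  refine ⟨n + m, a ^ p ^ m, b ^ p ^ n, ?_, ?_⟩
  · rw [map_pow, ha, ← pow_mul, ← pow_add]
  · rw [map_pow, hb, ← pow_mul, ← pow_add, add_comm]

variable [IsReduced M] [ExpChar M p] {j : K →+* M}

theorem apply_eq_of_apply_eq [ExpChar K p] (j : K →+* M) {a b : K} (h : i a = i b) :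
    j a = j b := by
  have hker : a - b ∈ RingHom.ker i := by rw [RingHom.mem_ker, map_sub, h, sub_self]
  obtain ⟨n, hn⟩ := sub_mem_pNilradical_iff_pow_expChar_pow_eq.1 (IsPRadical.ker_le i p hker)
  exact eq_of_pow_expChar_pow_eq p n (by simp only [← map_pow, hn])

theorem exists_pow_eq_of_comp_eq (hj : ∀ a n, ∃ y : M, y ^ p ^ n = j a) {f : L →+* M}
    (hf : f.comp i = j) (x : L) (n : ℕ) : ∃ y : M, y ^ p ^ n = f x := by
  obtain ⟨m, a, ha⟩ := IsPRadical.pow_mem i p x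
  obtain ⟨y, hy⟩ := hj a (n + m)
  rw [pow_add, pow_mul] at hy
  refine ⟨y, eq_of_pow_expChar_pow_eq p m ?_⟩
  rw [hy, ← map_pow, ← ha, ← hf, RingHom.comp_apply]

variable [ExpChar K p]

theorem exists_compatible_roots (hj : ∀ a n, ∃ y : M, y ^ p ^ n = j a) (x : L) :
    ∃ z : M, ∀ n a, i a = x ^ p ^ n → z ^ p ^ n = j a := by
  obtain ⟨n, a, ha⟩ := IsPRadical.pow_mem i p x
  obtain ⟨z, hz⟩ := hj a n
  refine ⟨z, fun m b hb ↦ eq_of_pow_expChar_pow_eq p n ?_⟩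
  have hab : i (a ^ p ^ m) = i (b ^ p ^ n) := by rw [map_pow, map_pow, ha, hb, pow_right_comm]
  calc (z ^ p ^ m) ^ p ^ n = j (a ^ p ^ m) := by rw [pow_right_comm, hz, map_pow]
    _ = j (b ^ p ^ n) := apply_eq_of_apply_eq i p j hab
    _ = j b ^ p ^ n := map_pow j b _

noncomputable def liftOfRootsAux (hj : ∀ a n, ∃ y : M, y ^ p ^ n = j a) (x : L) : M :=
  (exists_compatible_roots i p hj x).choose

theorem liftOfRootsAux_pow_eq (hj : ∀ a n, ∃ y : M, y ^ p ^ n = j a) {x : L} {n : ℕ} {a : K}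
    (h : i a = x ^ p ^ n) : liftOfRootsAux i p hj x ^ p ^ n = j a :=
  (exists_compatible_roots i p hj x).choose_spec n a h

theorem liftOfRootsAux_apply (hj : ∀ a n, ∃ y : M, y ^ p ^ n = j a) (a : K) :
    liftOfRootsAux i p hj (i a) = j a := by
  simpa using liftOfRootsAux_pow_eq i p hj (n := 0) (pow_one (i a)).symm

noncomputable def liftOfRoots [ExpChar L p] (hj : ∀ a n, ∃ y : M, y ^ p ^ n = j a) :
    L →+* M where
  toFun := liftOfRootsAux i p hj
  map_one' := by simpa using liftOfRootsAux_apply i p hj 1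
  map_zero' := by simpa using liftOfRootsAux_apply i p hj 0
  map_mul' x y := by
    obtain ⟨n, a, b, ha, hb⟩ := exists_common_pow_eq i p x y
    refine eq_of_pow_expChar_pow_eq p n ?_
    rw [mul_pow, liftOfRootsAux_pow_eq i p hj ha, liftOfRootsAux_pow_eq i p hj hb,
      ← map_mul]
    exact liftOfRootsAux_pow_eq i p hj (by rw [map_mul, ha, hb, mul_pow])
  map_add' x y := by
    obtain ⟨n, a, b, ha, hb⟩ := exists_common_pow_eq i p x y
    refine eq_of_pow_expChar_pow_eq p n ?_
    rw [add_pow_expChar_pow, liftOfRootsAux_pow_eq i p hj ha, liftOfRootsAux_pow_eq i p hj hb,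
      ← map_add]
    exact liftOfRootsAux_pow_eq i p hj (by rw [map_add, ha, hb, add_pow_expChar_pow])

theorem liftOfRoots_comp [ExpChar L p] (hj : ∀ a n, ∃ y : M, y ^ p ^ n = j a) :
    (liftOfRoots i p hj).comp i = j := by
  ext a
  exact liftOfRootsAux_apply i p hj a

end IsPRadical

theorem statement4 {K L : Type*} [Field K] [Field L] (p : ℕ) [ExpChar K p]
    (σ : K →+* K) (hK : ClosedUnderTwists p σ)
    [Algebra K L]
    -- L is a purely inseparable algebraic extension of K
    (hins : ∀ x : L, ∃ n : ℕ, x ^ p ^ n ∈ (algebraMap K L).range) :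
    -- σ extends uniquely to an endomorphism of L ...
    (∃! σL : L →+* L, ∀ x : K, σL (algebraMap K L x) = algebraMap K L (σ x)) ∧
    -- ... and any extension of σ to L is closed under twists
    (∀ σL : L →+* L, (∀ x : K, σL (algebraMap K L x) = algebraMap K L (σ x)) →
      ClosedUnderTwists p σL) := by
  have : ExpChar L p := expChar_of_injective_algebraMap (algebraMap K L).injective p
  have : IsPurelyInseparable K L := (isPurelyInseparable_iff_pow_mem K p).2 hins
  set i := algebraMap K L
  have hroots (a : K) (n : ℕ) : ∃ y : L, y ^ p ^ n = (i.comp σ) a := by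
    obtain ⟨y, hy⟩ := hK a n
    exact ⟨i y, by rw [← map_pow, hy, RingHom.comp_apply]⟩
  have hlift := IsPRadical.liftOfRoots_comp i p hroots
  refine ⟨⟨IsPRadical.liftOfRoots i p hroots, RingHom.congr_fun hlift, fun τ hτ ↦ ?_⟩,
    fun τ hτ ↦ IsPRadical.exists_pow_eq_of_comp_eq i p hroots (RingHom.ext hτ)⟩
  exact IsPRadical.injective_comp L i p ((RingHom.ext hτ).trans hlift.symm)
end

section
/- Let K be a difference field. Then there is an extension E of K in the category of difference fields such that: E is a model of FF; E is algebraic over K as a field extension; and for every model L of FF which is a difference field extension of K, there is a unique difference-field embedding of E into L over K. Moreover, if K is closed under twists, then E is separably algebraic over K. -/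
/-! STATEMENT 5: every difference field `K` admits a smallest model of FF over it:
an algebraic difference field extension `E ⊨ FF` embedding uniquely over `K` into any
model of FF extending `K`; if `K` is closed under twists then `E/K` is separably
algebraic. -/

universe u v

/-- `x` is separably algebraic over the subfield `A`: a simple root of a polynomial
with coefficients in `A`. -/
def IsSepAlgElemOver {Ω : Type*} [Field Ω] (A : Subfield Ω) (x : Ω) : Prop :=
  ∃ f : Polynomial Ω, (∀ n, f.coeff n ∈ A) ∧ Polynomial.eval x f = 0 ∧
    Polynomial.eval x (Polynomial.derivative f) ≠ 0

/-- `x` is algebraic over the subfield `A`. -/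
def IsAlgElemOver {Ω : Type*} [Field Ω] (A : Subfield Ω) (x : Ω) : Prop :=
  ∃ f : Polynomial Ω, f ≠ 0 ∧ (∀ n, f.coeff n ∈ A) ∧ Polynomial.eval x f = 0

/-- A difference field `(F, σ)` of characteristic exponent `p` is a model of FF:
it is closed under twists and `σ(F)` is relatively separably algebraically closed
in `F`. -/
def IsFF (p : ℕ) {F : Type*} [Field F] (σ : F →+* F) : Prop :=
  ClosedUnderTwists p σ ∧
  ∀ x : F, IsSepAlgElemOver σ.fieldRange x → x ∈ σ.fieldRange

/-!
Extend `σ` to an endomorphism `τ` of the algebraic closure `Ω` of `K`, and let `E` be the smallest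
intermediate field of `Ω/K` that is `τ`-stable, contains every `y` with `y ^ p ^ n ∈ τ(E)`, and
contains every `z` such that `τ z ∈ E` is separably algebraic over `τ(E)`. As `Ω` is
algebraically closed, `τ` restricts to a model of FF on `E`.

Given a model `(L, ρ)` of FF over `K`, Zorn's lemma gives a maximal `τ`-equivariant embedding over
`K` of an intermediate field of `Ω/K` into `L`. Its domain has the three closure properties: a `y`
with `y ^ p ^ n = τ x` can be sent to the `p ^ n`-th root of `ρ (e x)` in `L`, and a `z` with `τ z`
separable over `τ` of the domain can be sent to the `ρ`-preimage of `e (τ z)`, which exists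
because `L` is a model of FF. Hence the domain contains `E`. Two such embeddings agree on a field
with the same closure properties, hence on `E`. If `K` is closed under twists, the separable
closure of `K` in `Ω` has the closure properties, hence contains `E`.
-/

open Polynomial

section SeparablyAlgebraic

variable {M N : Type*} [Field M] [Field N]

theorem IsSepAlgElemOver.mono {A B : Subfield M} (hAB : A ≤ B) {x : M}
    (hx : IsSepAlgElemOver A x) : IsSepAlgElemOver B x :=
  let ⟨f, hf, h0, h1⟩ := hx
  ⟨f, fun n => hAB (hf n), h0, h1⟩

theorem IsSepAlgElemOver.isAlgElemOver {A : Subfield M} {x : M} (hx : IsSepAlgElemOver A x) :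
    IsAlgElemOver A x := by
  obtain ⟨f, hf, h0, h1⟩ := hx
  exact ⟨f, by rintro rfl; simp at h1, hf, h0⟩

theorem exists_map_eq_of_coeff_mem_map (g : M →+* N) {A : Subfield M} {f : N[X]}
    (hf : ∀ n, f.coeff n ∈ A.map g) : ∃ f₀ : M[X], (∀ n, f₀.coeff n ∈ A) ∧ f₀.map g = f := by
  have hlift : f ∈ lifts (g.comp A.subtype) := (lifts_iff_coeff_lifts f).mpr fun n => by
    obtain ⟨a, ha, hfa⟩ := Subfield.mem_map.mp (hf n)
    exact ⟨⟨a, ha⟩, hfa⟩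
  obtain ⟨f₁, hf₁⟩ := (mem_lifts f).mp hlift
  refine ⟨f₁.map A.subtype, fun n => by simp, ?_⟩
  rw [map_map, ← hf₁]

theorem exists_map_eq_of_coeff_mem_fieldRange (g : M →+* N) {f : N[X]}
    (hf : ∀ n, f.coeff n ∈ g.fieldRange) : ∃ f₀ : M[X], f₀.map g = f :=
  (mem_lifts f).mp <| (lifts_iff_coeff_lifts f).mpr fun n => RingHom.mem_fieldRange.mp (hf n)

theorem IsAlgElemOver.exists_apply_eq [IsAlgClosed M] {g : M →+* N} {x : N}
    (hx : IsAlgElemOver g.fieldRange x) : ∃ z, g z = x := by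
  obtain ⟨f, hf0, hf, h0⟩ := hx
  obtain ⟨f₀, rfl⟩ := exists_map_eq_of_coeff_mem_fieldRange g hf
  rw [← IsRoot.def, ← mem_roots hf0, (IsAlgClosed.splits f₀).roots_map g, Multiset.mem_map] at h0
  obtain ⟨z, -, hz⟩ := h0
  exact ⟨z, hz⟩

theorem isSepAlgElemOver_map_iff (g : M →+* N) {A : Subfield M} {x : M} :
    IsSepAlgElemOver (A.map g) (g x) ↔ IsSepAlgElemOver A x := by
  constructor
  · rintro ⟨f, hf, h0, h1⟩
    obtain ⟨f₀, hf₀, rfl⟩ := exists_map_eq_of_coeff_mem_map g hf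
    rw [derivative_map, eval_map_apply] at h1
    rw [eval_map_apply, map_eq_zero_iff g g.injective] at h0
    exact ⟨f₀, hf₀, h0, fun h => h1 (by rw [h, map_zero])⟩
  · rintro ⟨f, hf, h0, h1⟩
    refine ⟨f.map g, fun n => ?_, ?_, ?_⟩
    · rw [coeff_map]
      exact Subfield.mem_map.mpr ⟨_, hf n, rfl⟩
    · rw [eval_map_apply, h0, map_zero]
    · rw [derivative_map, eval_map_apply]
      exact (map_ne_zero g).mpr h1

theorem isSeparable_of_aeval_derivative_ne_zero {F : Type*} [Field F] [Algebra F M] {x : M}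
    {f : F[X]} (h0 : aeval x f = 0) (h1 : aeval x (derivative f) ≠ 0) : IsSeparable F x := by
  have hint : IsIntegral F x := IsAlgebraic.isIntegral ⟨f, by rintro rfl; simp at h1, h0⟩
  obtain ⟨q, rfl⟩ := minpoly.dvd F x h0
  rw [derivative_mul, map_add, map_mul, map_mul, minpoly.aeval, zero_mul, add_zero] at h1
  refine (separable_iff_derivative_ne_zero (minpoly.irreducible hint)).mpr fun h => ?_
  rw [h, map_zero, zero_mul] at h1
  exact h1 rfl

variable {F : Type*} [Field F] [Algebra F M]

theorem isSepAlgElemOver_iff_isSeparable {x : M} :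
    IsSepAlgElemOver (algebraMap F M).fieldRange x ↔ IsSeparable F x := by
  constructor
  · rintro ⟨f, hf, h0, h1⟩
    obtain ⟨f₀, rfl⟩ := exists_map_eq_of_coeff_mem_fieldRange (algebraMap F M) hf
    rw [eval_map_algebraMap] at h0
    rw [derivative_map, eval_map_algebraMap] at h1
    exact isSeparable_of_aeval_derivative_ne_zero h0 h1
  · intro hx
    refine ⟨(minpoly F x).map (algebraMap F M), fun n => by simp, ?_, ?_⟩
    · rw [eval_map_algebraMap, minpoly.aeval]
    · rw [derivative_map, eval_map_algebraMap]
      exact hx.aeval_derivative_ne_zero (minpoly.aeval F x)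

theorem isAlgElemOver_iff_isAlgebraic {x : M} :
    IsAlgElemOver (algebraMap F M).fieldRange x ↔ IsAlgebraic F x := by
  constructor
  · rintro ⟨f, hf0, hf, h0⟩
    obtain ⟨f₀, rfl⟩ := exists_map_eq_of_coeff_mem_fieldRange (algebraMap F M) hf
    rw [eval_map_algebraMap] at h0
    exact ⟨f₀, by rintro rfl; simp at hf0, h0⟩
  · rintro ⟨f, hf0, h0⟩
    refine ⟨f.map (algebraMap F M), (Polynomial.map_ne_zero_iff (algebraMap F M).injective).mpr hf0,
      fun n => by simp, ?_⟩
    rw [eval_map_algebraMap, h0]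

end SeparablyAlgebraic

section Hull

variable {F Ω : Type*} [Field F] [Field Ω] [Algebra F Ω] (τ : Ω →+* Ω) (p : ℕ)

structure IsFFClosed (T : IntermediateField F Ω) : Prop where
  map_mem : ∀ x ∈ T, τ x ∈ T
  mem_of_pow_eq : ∀ x ∈ T, ∀ (n : ℕ) (y : Ω), y ^ p ^ n = τ x → y ∈ T
  mem_of_apply_eq : ∀ x ∈ T, IsSepAlgElemOver (T.toSubfield.map τ) x → ∀ z, τ z = x → z ∈ T

variable (F) in
def ffHull : IntermediateField F Ω := sInf {T | IsFFClosed τ p T}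

theorem isFFClosed_ffHull : IsFFClosed τ p (ffHull F τ p) where
  map_mem x hx := IntermediateField.mem_sInf.mpr fun T hT =>
    hT.map_mem x (IntermediateField.mem_sInf.mp hx T hT)
  mem_of_pow_eq x hx n y hy := IntermediateField.mem_sInf.mpr fun T hT =>
    hT.mem_of_pow_eq x (IntermediateField.mem_sInf.mp hx T hT) n y hy
  mem_of_apply_eq x hx hsep z hz := IntermediateField.mem_sInf.mpr fun T hT =>
    hT.mem_of_apply_eq x (IntermediateField.mem_sInf.mp hx T hT)
      (hsep.mono ((Subfield.gc_map_comap τ).monotone_l (sInf_le hT : ffHull F τ p ≤ T))) z hz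

theorem ffHull_le {T : IntermediateField F Ω} (hT : IsFFClosed τ p T) : ffHull F τ p ≤ T :=
  sInf_le hT

theorem IsFFClosed.isFF [IsAlgClosed Ω] [ExpChar Ω p] {T : IntermediateField F Ω}
    (hT : IsFFClosed τ p T) : IsFF p (τ.restrict T T hT.map_mem) := by
  constructor
  · intro x n
    obtain ⟨y, hy⟩ := IsAlgClosed.exists_pow_nat_eq (τ x) (expChar_pow_pos Ω p n)
    exact ⟨⟨y, hT.mem_of_pow_eq x x.2 n y hy⟩, Subtype.ext hy⟩
  · intro x hx
    rw [← isSepAlgElemOver_map_iff T.toSubfield.subtype] at hx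
    replace hx : IsSepAlgElemOver (T.toSubfield.map τ) x := hx.mono <| by
      rintro _ ⟨_, ⟨y, rfl⟩, rfl⟩
      exact ⟨y, y.2, rfl⟩
    have hle : T.toSubfield.map τ ≤ τ.fieldRange := by
      rintro _ ⟨y, -, rfl⟩
      exact ⟨y, rfl⟩
    obtain ⟨z, hz⟩ := (hx.mono hle).isAlgElemOver.exists_apply_eq
    exact ⟨⟨z, hT.mem_of_apply_eq x x.2 hx z hz⟩, Subtype.ext hz⟩

end Hull

section SeparableClosure

variable {F Ω : Type*} [Field F] [Field Ω] [Algebra F Ω]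

theorem isSepAlgElemOver_toSubfield_iff {T : IntermediateField F Ω} {x : Ω} :
    IsSepAlgElemOver T.toSubfield x ↔ IsSeparable T x := by
  have : (algebraMap T Ω).fieldRange = T.toSubfield := by
    ext y
    simp
  rw [← isSepAlgElemOver_iff_isSeparable, this]

variable {σ : F →+* F} {τ : Ω →+* Ω} (hτ : τ.comp (algebraMap F Ω) = (algebraMap F Ω).comp σ)
include hτ

theorem IsSeparable.apply_of_comp_eq {x : Ω} (hx : IsSeparable F x) : IsSeparable F (τ x) :=
  (Separable.map hx (f := σ)).of_dvd <| minpoly.dvd F _ <| by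
    rw [← map_aeval_eq_aeval_map hτ.symm, minpoly.aeval, map_zero]

theorem IsSeparable.of_pow_eq_apply {p : ℕ} [ExpChar F p] (hσ : ClosedUnderTwists p σ)
    {x y : Ω} (hx : IsSeparable F x) {n : ℕ} (hy : y ^ p ^ n = τ x) : IsSeparable F y := by
  have : ExpChar Ω p := expChar_of_injective_algebraMap (algebraMap F Ω).injective p
  obtain ⟨g, hg⟩ := (mem_lifts ((minpoly F x).map σ)).mp <|
    (lifts_iff_coeff_lifts (f := iterateFrobenius F p n) _).mpr fun i => by
      rw [coeff_map]
      exact hσ _ n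
  have hfrob : (algebraMap F Ω).comp (iterateFrobenius F p n) =
      (iterateFrobenius Ω p n).comp (algebraMap F Ω) := by
    ext a
    simp [iterateFrobenius_def]
  refine ((separable_map _).mp (hg ▸ Separable.map hx)).of_dvd (minpoly.dvd F y ?_)
  have hpow : aeval y g ^ p ^ n = 0 := by
    rw [← iterateFrobenius_def, map_aeval_eq_aeval_map hfrob, hg, iterateFrobenius_def, hy,
      ← map_aeval_eq_aeval_map hτ.symm, minpoly.aeval, map_zero]
  exact pow_eq_zero_iff (expChar_pow_pos F p n).ne' |>.mp hpow

theorem isFFClosed_separableClosure {p : ℕ} [ExpChar F p] (hσ : ClosedUnderTwists p σ) :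
    IsFFClosed τ p (separableClosure F Ω) where
  map_mem x hx := mem_separableClosure_iff.mpr <|
    IsSeparable.apply_of_comp_eq hτ (mem_separableClosure_iff.mp hx)
  mem_of_pow_eq x hx n y hy :=
    mem_separableClosure_iff.mpr <|
      IsSeparable.of_pow_eq_apply hτ hσ (mem_separableClosure_iff.mp hx) hy
  mem_of_apply_eq x hx hsep z hz := by
    subst hz
    rw [isSepAlgElemOver_map_iff, isSepAlgElemOver_toSubfield_iff] at hsep
    exact mem_separableClosure_iff.mpr (hsep.of_algebra_isSeparable_of_isSeparable F)

end SeparableClosure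

namespace IntermediateField.Lifts

variable {F Ω L : Type*} [Field F] [Field Ω] [Field L] [Algebra F Ω] [Algebra F L]
  (τ : Ω →+* Ω) (ρ : L →+* L)

structure IsEquivariant (φ : Lifts F Ω L) : Prop where
  map_mem : ∀ x ∈ φ.carrier, τ x ∈ φ.carrier
  emb_map : ∀ x : φ.carrier, φ.emb ⟨τ x, map_mem x x.2⟩ = ρ (φ.emb x)

variable {τ ρ}

theorem isEquivariant_bot {σ : F →+* F} (hτ : τ.comp (algebraMap F Ω) = (algebraMap F Ω).comp σ)
    (hρ : ρ.comp (algebraMap F L) = (algebraMap F L).comp σ) :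
    IsEquivariant τ ρ (⊥ : Lifts F Ω L) := by
  have hmap (x : Ω) (hx : x ∈ (⊥ : Lifts F Ω L).carrier) :
      τ x ∈ (⊥ : Lifts F Ω L).carrier := by
    obtain ⟨a, rfl⟩ := mem_bot.mp hx
    exact mem_bot.mpr ⟨σ a, (RingHom.congr_fun hτ a).symm⟩
  refine ⟨hmap, fun ⟨x, hx⟩ => ?_⟩
  obtain ⟨a, rfl⟩ := mem_bot.mp hx
  have hσa : (⟨τ (algebraMap F Ω a), hmap _ hx⟩ : (⊥ : Lifts F Ω L).carrier) =
      algebraMap F _ (σ a) := Subtype.ext (RingHom.congr_fun hτ a)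
  rw [hσa, show (⟨algebraMap F Ω a, hx⟩ : (⊥ : Lifts F Ω L).carrier) = algebraMap F _ a from rfl,
    AlgHom.commutes, AlgHom.commutes]
  exact (RingHom.congr_fun hρ a).symm

theorem exists_mem_of_mem_union {c : Set (Lifts F Ω L)} (hc : IsChain (· ≤ ·) c)
    (hne : c.Nonempty) {x : Ω} (hx : x ∈ (Lifts.union c hc).carrier) : ∃ φ ∈ c, x ∈ φ.carrier := by
  have : Nonempty c := hne.to_subtype
  have dir : Directed (· ≤ ·) fun φ : c => φ.1.carrier :=
    hc.directedOn.directed_val.mono_comp _ fun _ _ h => h.1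
  rw [carrier_union, ← SetLike.mem_coe, coe_iSup_of_directed dir,
    Set.mem_iUnion, Subtype.exists] at hx
  obtain ⟨φ, hφ, hxφ⟩ := hx
  exact ⟨φ, hφ, hxφ⟩

theorem IsEquivariant.union {c : Set (Lifts F Ω L)} (hc : IsChain (· ≤ ·) c) (hne : c.Nonempty)
    (h : ∀ φ ∈ c, IsEquivariant τ ρ φ) : IsEquivariant τ ρ (Lifts.union c hc) := by
  have hmap (x : Ω) (hx : x ∈ (Lifts.union c hc).carrier) : τ x ∈ (Lifts.union c hc).carrier := by
    obtain ⟨φ, hφ, hxφ⟩ := exists_mem_of_mem_union hc hne hx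
    exact (le_union c hc hφ).1 ((h φ hφ).map_mem x hxφ)
  refine ⟨hmap, fun ⟨x, hx⟩ => ?_⟩
  obtain ⟨φ, hφ, hxφ⟩ := exists_mem_of_mem_union hc hne hx
  obtain ⟨hle, hemb⟩ := le_union c hc hφ
  have h₁ := hemb ⟨τ x, (h φ hφ).map_mem x hxφ⟩
  have h₂ := hemb ⟨x, hxφ⟩
  exact h₁.trans <| ((h φ hφ).emb_map ⟨x, hxφ⟩).trans (congrArg ρ h₂.symm)

section PowRoot

variable (p : ℕ) [ExpChar Ω p] [ExpChar L p]

theorem exists_le_pow_root (φ : Lifts F Ω L) (n : ℕ) :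
    ∃ ψ : Lifts F Ω L, φ ≤ ψ ∧
      (∀ s, s ∈ ψ.carrier ↔ ∃ t : φ.carrier, (t : Ω) = s ^ p ^ n ∧ ∃ v : L, v ^ p ^ n = φ.emb t) ∧
      ∀ (s : ψ.carrier) (t : φ.carrier), (t : Ω) = s ^ p ^ n → ψ.emb s ^ p ^ n = φ.emb t := by
  set R := (iterateFrobenius L p n).fieldRange
  set A := ((R.comap (φ.emb : φ.carrier →+* L)).map (φ.carrier.val : φ.carrier →+* Ω)).comap
    (iterateFrobenius Ω p n)
  have hA (s : Ω) :
      s ∈ A ↔ ∃ t : φ.carrier, (t : Ω) = s ^ p ^ n ∧ ∃ v : L, v ^ p ^ n = φ.emb t := by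
    simp only [A, R, Subfield.mem_comap, Subfield.mem_map, RingHom.mem_fieldRange]
    constructor
    · rintro ⟨t, ht, hts⟩
      exact ⟨t, hts, ht⟩
    · rintro ⟨t, hts, ht⟩
      exact ⟨t, ht, hts⟩
  set T := A.toIntermediateField fun a => (hA _).mpr
    ⟨algebraMap F _ (a ^ p ^ n), by simp, algebraMap F L a, by simp⟩
  have hpow (s : Ω) (hs : s ∈ T) : iterateFrobenius Ω p n s ∈ φ.carrier := by
    obtain ⟨t, hts, -⟩ := (hA s).mp hs
    rw [iterateFrobenius_def, ← hts]
    exact t.2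
  set g := (φ.emb : φ.carrier →+* L).comp ((iterateFrobenius Ω p n).restrict T φ.carrier hpow)
  have hg (s : T) : g s ∈ R := by
    obtain ⟨t, hts, v, hv⟩ := (hA s).mp s.2
    exact ⟨v, hv.trans (congrArg φ.emb (Subtype.ext hts))⟩
  set h := (RingHom.rangeRestrictFieldEquiv (iterateFrobenius L p n)).symm.toRingHom.comp
    (g.codRestrict R hg)
  have h_pow (s : T) : h s ^ p ^ n = g s :=
    RingHom.rangeRestrictFieldEquiv_apply_symm_apply (iterateFrobenius L p n) _
  have hle : φ.carrier ≤ T := fun t ht => (hA t).mpr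
    ⟨⟨t, ht⟩ ^ p ^ n, rfl, φ.emb ⟨t, ht⟩, (map_pow _ _ _).symm⟩
  have h_ext (t : φ.carrier) : h (inclusion hle t) = φ.emb t :=
    iterateFrobenius_inj L p n <| (h_pow _).trans (map_pow φ.emb t _)
  let emb : T →ₐ[F] L :=
    { h with commutes' := fun a => (h_ext (algebraMap F _ a)).trans (φ.emb.commutes a) }
  refine ⟨⟨T, emb⟩, ⟨hle, h_ext⟩, hA, fun s t hts => ?_⟩
  exact (h_pow s).trans (congrArg φ.emb (Subtype.ext hts.symm))

theorem IsEquivariant.exists_le_mem_of_pow_eq {φ : Lifts F Ω L} (hφ : IsEquivariant τ ρ φ)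
    (hρ : ClosedUnderTwists p ρ) {x : Ω} (hx : x ∈ φ.carrier) {n : ℕ} {y : Ω}
    (hy : y ^ p ^ n = τ x) : ∃ ψ, φ ≤ ψ ∧ IsEquivariant τ ρ ψ ∧ y ∈ ψ.carrier := by
  obtain ⟨ψ, hle, hmem, hpow⟩ := exists_le_pow_root p φ n
  have hτ_pow {s : Ω} {t : φ.carrier} (hts : (t : Ω) = s ^ p ^ n) :
      ((⟨τ t, hφ.map_mem t t.2⟩ : φ.carrier) : Ω) = τ s ^ p ^ n := by
    simp [hts]
  have hmap (s : Ω) (hs : s ∈ ψ.carrier) : τ s ∈ ψ.carrier := by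
    obtain ⟨t, hts, v, hv⟩ := (hmem s).mp hs
    exact (hmem _).mpr ⟨_, hτ_pow hts, ρ v, by rw [← map_pow, hv, hφ.emb_map]⟩
  refine ⟨ψ, hle, ⟨hmap, fun s => iterateFrobenius_inj L p n ?_⟩, ?_⟩
  · obtain ⟨t, hts, -⟩ := (hmem s).mp s.2
    simp only [iterateFrobenius_def]
    rw [hpow _ _ (hτ_pow hts), hφ.emb_map, ← map_pow, hpow s t hts]
  · obtain ⟨v, hv⟩ := hρ (φ.emb ⟨x, hx⟩) n
    exact (hmem y).mpr ⟨⟨τ x, hφ.map_mem x hx⟩, hy.symm, v, hv.trans (hφ.emb_map _).symm⟩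

end PowRoot

theorem isEquivariant_of_le_closure {ψ : Lifts F Ω L} {G : Set Ω}
    (hG : ψ.carrier.toSubfield ≤ Subfield.closure G) (hGψ : G ⊆ ψ.carrier)
    (hmap : ∀ g ∈ G, τ g ∈ ψ.carrier)
    (hemb : ∀ g (hg : g ∈ G), ψ.emb ⟨τ g, hmap g hg⟩ = ρ (ψ.emb ⟨g, hGψ hg⟩)) :
    IsEquivariant τ ρ ψ := by
  have hmap' : ∀ x ∈ ψ.carrier, τ x ∈ ψ.carrier := fun x hx =>
    (hG.trans (Subfield.closure_le.mpr hmap : _ ≤ ψ.carrier.toSubfield.comap τ)) hx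
  let eq := ((ψ.emb : ψ.carrier →+* L).comp (τ.restrict _ _ hmap')).eqLocusField
    (ρ.comp ψ.emb)
  have hle : ψ.carrier.toSubfield ≤ eq.map (ψ.carrier.val : ψ.carrier →+* Ω) :=
    hG.trans <| Subfield.closure_le.mpr fun g hg => ⟨⟨g, hGψ hg⟩, hemb g hg, rfl⟩
  refine ⟨hmap', fun x => ?_⟩
  obtain ⟨x', hx', hxx'⟩ := hle x.2
  obtain rfl : x' = x := Subtype.ext hxx'
  exact hx'

theorem exists_le_adjoin_emb_eq (φ : Lifts F Ω L) {z : Ω} (hz : IsIntegral φ.carrier z) {v : L}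
    (hv : (minpoly φ.carrier z).eval₂ (φ.emb : φ.carrier →+* L) v = 0) :
    ∃ ψ : Lifts F Ω L, φ ≤ ψ ∧ ψ.carrier = φ.carrier⟮z⟯.restrictScalars F ∧
      ∀ h : z ∈ ψ.carrier, ψ.emb ⟨z, h⟩ = v := by
  let g := (AdjoinRoot.lift (φ.emb : φ.carrier →+* L) v hv).comp
    (adjoinRootEquivAdjoin φ.carrier hz).symm.toRingHom
  have hg (t : φ.carrier) : g (algebraMap _ _ t) = φ.emb t := by
    simp [g, AlgEquiv.commutes]
  let emb : φ.carrier⟮z⟯.restrictScalars F →ₐ[F] L :=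
    { g with commutes' := fun a => (hg (algebraMap F _ a)).trans (φ.emb.commutes a) }
  refine ⟨⟨_, emb⟩, ⟨fun t ht => algebraMap_mem φ.carrier⟮z⟯ ⟨t, ht⟩, hg⟩, rfl, fun _ => ?_⟩
  show g (AdjoinSimple.gen _ z) = v
  simp [g, adjoinRootEquivAdjoin_symm_apply_gen]

theorem IsEquivariant.exists_root_minpoly {φ : Lifts F Ω L} (hφ : IsEquivariant τ ρ φ)
    (hρ : ∀ w, IsSepAlgElemOver ρ.fieldRange w → w ∈ ρ.fieldRange) {z : Ω}
    (hz : IsSeparable φ.carrier z) (hτz : τ z ∈ φ.carrier) :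
    ∃ v : L, ρ v = φ.emb ⟨τ z, hτz⟩ ∧
      (minpoly φ.carrier z).eval₂ (φ.emb : φ.carrier →+* L) v = 0 := by
  set f : φ.carrier →+* L := (φ.emb : φ.carrier →+* L)
  set τφ := τ.restrict _ _ hφ.map_mem
  have hcomm : f.comp τφ = ρ.comp f := RingHom.ext hφ.emb_map
  have hτφ (q : φ.carrier[X]) : ((q.eval₂ τφ ⟨τ z, hτz⟩ : φ.carrier) : Ω) = τ (aeval z q) := by
    rw [aeval_def, hom_eval₂]
    exact hom_eval₂ q τφ φ.carrier.val.toRingHom _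
  have heval (q : φ.carrier[X]) : (q.map (ρ.comp f)).eval (f ⟨τ z, hτz⟩) = 0 ↔ aeval z q = 0 := by
    rw [eval_map, ← hcomm, ← hom_eval₂, map_eq_zero_iff f f.injective, ← ZeroMemClass.coe_eq_zero,
      hτφ, map_eq_zero_iff τ τ.injective]
  obtain ⟨v, hv⟩ := hρ (f ⟨τ z, hτz⟩) ⟨(minpoly φ.carrier z).map (ρ.comp f),
    fun n => by rw [coeff_map]; exact ⟨_, rfl⟩, (heval _).mpr (minpoly.aeval _ _), by
      rw [derivative_map]
      exact (heval _).not.mpr (hz.aeval_derivative_ne_zero (minpoly.aeval _ _))⟩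
  refine ⟨v, hv, ρ.injective ?_⟩
  rw [map_zero, hom_eval₂, hv, ← eval_map, heval, minpoly.aeval]

theorem IsEquivariant.exists_le_mem_of_apply_mem {φ : Lifts F Ω L} (hφ : IsEquivariant τ ρ φ)
    (hρ : ∀ w, IsSepAlgElemOver ρ.fieldRange w → w ∈ ρ.fieldRange) {z : Ω}
    (hτz : τ z ∈ φ.carrier) (hsep : IsSepAlgElemOver (φ.carrier.toSubfield.map τ) (τ z)) :
    ∃ ψ, φ ≤ ψ ∧ IsEquivariant τ ρ ψ ∧ z ∈ ψ.carrier := by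
  have hz : IsSeparable φ.carrier z :=
    isSepAlgElemOver_toSubfield_iff.mp ((isSepAlgElemOver_map_iff τ).mp hsep)
  obtain ⟨v, hv, hvm⟩ := hφ.exists_root_minpoly hρ hz hτz
  obtain ⟨ψ, ⟨hle, hemb⟩, hcarrier, hψz⟩ := exists_le_adjoin_emb_eq φ hz.isIntegral hvm
  have hzψ : z ∈ ψ.carrier := hcarrier ▸ mem_adjoin_simple_self _ z
  refine ⟨ψ, ⟨hle, hemb⟩, isEquivariant_of_le_closure
    (G := Set.range (algebraMap φ.carrier Ω) ∪ {z}) (hcarrier ▸ le_rfl) ?_ ?_ ?_, hzψ⟩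
  · rintro _ (⟨t, rfl⟩ | rfl)
    exacts [hle t.2, hzψ]
  · rintro _ (⟨t, rfl⟩ | rfl)
    exacts [hle (hφ.map_mem t t.2), hle hτz]
  · rintro _ (⟨t, rfl⟩ | rfl)
    · exact (hemb _).trans ((hφ.emb_map t).trans (congrArg ρ (hemb t).symm))
    · exact (hemb _).trans (hv.symm.trans (congrArg ρ (hψz hzψ).symm))

end IntermediateField.Lifts

section UniversalProperty

open IntermediateField Lifts

variable {F Ω L : Type*} [Field F] [Field Ω] [Field L] [Algebra F Ω]
  {τ : Ω →+* Ω} {ρ : L →+* L} {p : ℕ} [ExpChar L p]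

theorem exists_algHom_ffHull [Algebra F L] [ExpChar Ω p] {σ : F →+* F}
    (hτ : τ.comp (algebraMap F Ω) = (algebraMap F Ω).comp σ)
    (hρ : ρ.comp (algebraMap F L) = (algebraMap F L).comp σ) (hL : IsFF p ρ) :
    ∃ e : ffHull F τ p →ₐ[F] L,
      ∀ x, e (τ.restrict _ _ (isFFClosed_ffHull τ p).map_mem x) = ρ (e x) := by
  obtain ⟨M, -, hM⟩ := zorn_le_nonempty₀ {φ : Lifts F Ω L | IsEquivariant τ ρ φ}
    (fun c hcs hc φ hφ => ⟨union c hc, IsEquivariant.union hc ⟨φ, hφ⟩ hcs, le_union c hc⟩)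
    ⊥ (isEquivariant_bot hτ hρ)
  have hclosed : IsFFClosed τ p M.carrier := by
    refine ⟨hM.1.map_mem, fun x hx n y hy => ?_, fun x hx hsep z hz => ?_⟩
    · obtain ⟨ψ, hle, hψ, hyψ⟩ := hM.1.exists_le_mem_of_pow_eq p hL.1 hx hy
      exact (hM.2 hψ hle).1 hyψ
    · subst hz
      obtain ⟨ψ, hle, hψ, hzψ⟩ := hM.1.exists_le_mem_of_apply_mem hL.2 hx hsep
      exact (hM.2 hψ hle).1 hzψ
  have hle := ffHull_le τ p hclosed
  exact ⟨M.emb.comp (inclusion hle), fun x => hM.1.emb_map (inclusion hle x)⟩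

theorem ringHom_ext_ffHull {e₁ e₂ : ffHull F τ p →+* L}
    (h₁ : ∀ x, e₁ (τ.restrict _ _ (isFFClosed_ffHull τ p).map_mem x) = ρ (e₁ x))
    (h₂ : ∀ x, e₂ (τ.restrict _ _ (isFFClosed_ffHull τ p).map_mem x) = ρ (e₂ x))
    (h : e₁.comp (algebraMap F _) = e₂.comp (algebraMap F _)) : e₁ = e₂ := by
  have hE := isFFClosed_ffHull (F := F) τ p
  let eq : IntermediateField F Ω :=
    ((e₁.eqLocusField e₂).map ((ffHull F τ p).val : ffHull F τ p →+* Ω)).toIntermediateField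
      fun a => ⟨algebraMap F _ a, RingHom.congr_fun h a, rfl⟩
  have heq_le : eq ≤ ffHull F τ p := by
    rintro _ ⟨x, -, rfl⟩
    exact x.2
  have hmem (x : ffHull F τ p) : (x : Ω) ∈ eq ↔ e₁ x = e₂ x := by
    refine ⟨?_, fun hx => ⟨x, hx, rfl⟩⟩
    rintro ⟨x', hx', hxx'⟩
    obtain rfl := Subtype.ext hxx'
    exact hx'
  have hclosed : IsFFClosed τ p eq := by
    refine ⟨fun x hx => ?_, fun x hx n y hy => ?_, fun x hx hsep z hz => ?_⟩
    · lift x to ffHull F τ p using heq_le hx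
      exact (hmem (τ.restrict _ _ hE.map_mem x)).mpr (by rw [h₁, h₂, (hmem x).mp hx])
    · lift x to ffHull F τ p using heq_le hx
      lift y to ffHull F τ p using hE.mem_of_pow_eq x x.2 n y hy
      have hy' : y ^ p ^ n = τ.restrict _ _ hE.map_mem x := Subtype.ext hy
      refine (hmem y).mpr (iterateFrobenius_inj L p n ?_)
      simp only [iterateFrobenius_def]
      rw [← map_pow, ← map_pow, hy', h₁, h₂, (hmem x).mp hx]
    · subst hz
      lift z to ffHull F τ p using hE.mem_of_apply_eq _ (heq_le hx)
        (hsep.mono ((Subfield.gc_map_comap τ).monotone_l heq_le)) z rfl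
      refine (hmem z).mpr (ρ.injective ?_)
      rw [← h₁, ← h₂]
      exact (hmem _).mp hx
  ext x
  exact (hmem x).mp (ffHull_le τ p hclosed x.2)

end UniversalProperty

theorem exists_comp_algebraMap_eq_algebraicClosure {K : Type*} [Field K] (σ : K →+* K) :
    ∃ τ : AlgebraicClosure K →+* AlgebraicClosure K,
      τ.comp (algebraMap K _) = (algebraMap K _).comp σ := by
  -- the target is a `K`-algebra through `algebraMap ∘ σ`; this structure is passed explicitly
  -- everywhere so that instance search never confuses it with the standard one
  have tf := (@Module.isTorsionFree_iff_algebraMap_injective K _ _ _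
    ((algebraMap K (AlgebraicClosure K)).comp σ).toAlgebra _ _).mpr
    ((algebraMap K (AlgebraicClosure K)).comp σ).injective
  let f := @IsAlgClosed.lift (AlgebraicClosure K) _ _ K _ _ (AlgebraicClosure K) _ _ _
    ((algebraMap K (AlgebraicClosure K)).comp σ).toAlgebra _ tf _
  exact ⟨@AlgHom.toRingHom K _ _ _ _ _ _ ((algebraMap K (AlgebraicClosure K)).comp σ).toAlgebra f,
    RingHom.ext (@AlgHom.commutes K _ _ _ _ _ _
      ((algebraMap K (AlgebraicClosure K)).comp σ).toAlgebra f)⟩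

theorem statement5 (p : ℕ) (K : DiffField.{u}) [ExpChar K.carrier p] :
    ∃ (E : DiffField.{u}) (ι : K.carrier →+* E.carrier),
      -- ι is an embedding of difference fields
      (∀ x, ι (K.sg x) = E.sg (ι x)) ∧
      -- E is a model of FF
      IsFF p E.sg ∧
      -- E is algebraic over K
      (∀ x : E.carrier, IsAlgElemOver ι.fieldRange x) ∧
      -- universal property: unique difference-field embedding over K into every
      -- model of FF extending K
      (∀ (L : DiffField.{v}) (j : K.carrier →+* L.carrier),
        (∀ x, j (K.sg x) = L.sg (j x)) → IsFF p L.sg →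
        ∃! e : E.carrier →+* L.carrier,
          (∀ x, e (E.sg x) = L.sg (e x)) ∧ e.comp ι = j) ∧
      -- moreover, if K is closed under twists then E is separably algebraic over K
      (ClosedUnderTwists p K.sg → ∀ x : E.carrier, IsSepAlgElemOver ι.fieldRange x) := by
  obtain ⟨τ, hτ⟩ := exists_comp_algebraMap_eq_algebraicClosure K.sg
  have : ExpChar (AlgebraicClosure K.carrier) p :=
    expChar_of_injective_algebraMap (algebraMap K.carrier _).injective p
  have hE := isFFClosed_ffHull (F := K.carrier) τ p
  refine ⟨⟨ffHull K.carrier τ p, τ.restrict _ _ hE.map_mem⟩, algebraMap _ _,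
    fun x => Subtype.ext (RingHom.congr_fun hτ x).symm, hE.isFF, fun x => ?_,
    fun L j hj hL => ?_, fun hK x => ?_⟩
  · exact isAlgElemOver_iff_isAlgebraic.mpr
      (IntermediateField.isAlgebraic_iff.mpr (Algebra.IsAlgebraic.isAlgebraic _))
  · let := j.toAlgebra
    have : ExpChar L.carrier p := expChar_of_injective_ringHom j.injective p
    obtain ⟨e, he⟩ := exists_algHom_ffHull hτ (RingHom.ext fun x => (hj x).symm) hL
    exact ⟨e, ⟨he, e.comp_algebraMap⟩, fun e' ⟨he', he'j⟩ =>
      ringHom_ext_ffHull he' he (he'j.trans e.comp_algebraMap.symm)⟩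
  · refine isSepAlgElemOver_iff_isSeparable.mpr <| IsSeparable.of_algHom (ffHull K.carrier τ p).val ?_
    exact mem_separableClosure_iff.mp (ffHull_le τ p (isFFClosed_separableClosure hτ hK) x.2)
end

section
/- Let K be a model of FF and let L be a purely inseparable algebraic field extension of K. Then σ extends uniquely to a ring endomorphism of L, and equipped with this extension L is a model of FF. -/
/-!
Every `x ∈ L` has some `x ^ p ^ n` in `K`, so an extension of `σ` must send `x` to the
`p ^ n`-th root of `σ (x ^ p ^ n)`; closure under twists says this root exists in `K`, which gives
existence (via `PerfectRing.lift`) and uniqueness (Frobenius is injective). For the FF property,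
raising a separable algebraic `x` over `σL(L)` and the coefficients of its polynomial to a large
`p`-power moves everything into `K` and `σ(K)`, where `K` being FF puts `x ^ p ^ R` in `σ(K)`;
an element that is both separable and purely inseparable over `σL(L)` lies in `σL(L)`.
-/

open Polynomial Filter

theorem mem_range_of_isSeparable_of_pow_mem {F E : Type*} [Field F] [Field E] [Algebra F E]
    (q : ℕ) [ExpChar F q] {x : E} (hsep : IsSeparable F x) {n : ℕ}
    (hx : x ^ q ^ n ∈ (algebraMap F E).range) : x ∈ (algebraMap F E).range := by
  have hdeg := (minpoly.natSepDegree_eq_one_iff_pow_mem q).2 ⟨n, hx⟩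
  rwa [hsep.natSepDegree_eq_natDegree, minpoly.natDegree_eq_one_iff] at hdeg

section SeparableElements

variable {F E : Type*} [Field F] [Field E]

theorem isSepAlgElemOver_apply_of_coeff_mem (φ : F →+* E) {B : Subfield E} {f : F[X]}
    {x : F} (hf : ∀ n, φ (f.coeff n) ∈ B) (h0 : f.eval x = 0)
    (h1 : f.derivative.eval x ≠ 0) : IsSepAlgElemOver B (φ x) :=
  ⟨f.map φ, fun n => by rw [coeff_map]; exact hf n, by rw [eval_map_apply, h0, map_zero],
    by rwa [derivative_map, eval_map_apply, _root_.map_ne_zero]⟩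

theorem IsSepAlgElemOver.of_map {φ : F →+* E} {A : Subfield F} {x : F}
    (h : IsSepAlgElemOver (A.map φ) (φ x)) : IsSepAlgElemOver A x := by
  obtain ⟨g, hg, h0, h1⟩ := h
  obtain ⟨g₀, rfl⟩ := (mem_lifts g).1 <| (lifts_iff_coeff_lifts g).2 fun n => by
    obtain ⟨a, -, ha⟩ := Subfield.mem_map.1 (hg n)
    exact ⟨a, ha⟩
  refine ⟨g₀, fun n => ?_, ?_, ?_⟩
  · obtain ⟨a, ha, hφ⟩ := Subfield.mem_map.1 (hg n)
    rw [coeff_map, φ.injective.eq_iff] at hφ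
    exact hφ ▸ ha
  · rwa [eval_map_apply, map_eq_zero] at h0
  · rwa [derivative_map, eval_map_apply, _root_.map_ne_zero] at h1

theorem IsSepAlgElemOver.isSeparable {A : Subfield F} {x : F} (h : IsSepAlgElemOver A x) :
    IsSeparable A x := by
  obtain ⟨f, hf, h0, h1⟩ := h
  obtain ⟨f₀, rfl⟩ := (mem_lifts (f := algebraMap A F) f).1 <|
    (lifts_iff_coeff_lifts f).2 fun n => ⟨⟨_, hf n⟩, rfl⟩
  rw [eval_map_algebraMap] at h0
  rw [derivative_map, eval_map_algebraMap] at h1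
  have hint : IsIntegral A x :=
    (show IsAlgebraic A x from ⟨f₀, by rintro rfl; simp at h1, h0⟩).isIntegral
  obtain ⟨g, rfl⟩ := minpoly.dvd A x h0
  refine (separable_iff_derivative_ne_zero (minpoly.irreducible hint)).2 fun hd => h1 ?_
  simp [derivative_mul, hd]

theorem IsSepAlgElemOver.mem_of_pow_mem (p : ℕ) [ExpChar F p] {A : Subfield F} {x : F}
    (h : IsSepAlgElemOver A x) {n : ℕ} (hx : x ^ p ^ n ∈ A) : x ∈ A := by
  obtain ⟨y, rfl⟩ := mem_range_of_isSeparable_of_pow_mem p h.isSeparable (n := n) ⟨⟨_, hx⟩, rfl⟩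
  exact y.2

end SeparableElements

theorem eventually_pow_pow_mem {M S : Type*} [Monoid M] [SetLike S M] [SubmonoidClass S M]
    {s : S} (p : ℕ) {y : M} {n : ℕ} (h : y ^ p ^ n ∈ s) : ∀ᶠ m in atTop, y ^ p ^ m ∈ s :=
  eventually_atTop.2 ⟨n, fun m hm => by
    rw [← Nat.sub_add_cancel hm, pow_add, pow_mul']; exact pow_mem h _⟩

theorem IsPurelyInseparable.exists_comp_algebraMap_eq {F E M : Type*} [Field F] [Field E]
    [Field M] [Algebra F E] [IsPurelyInseparable F E] (p : ℕ) [ExpChar F p] (i : F →+* M)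
    (hi : ∀ a n, ∃ y, y ^ p ^ n = i a) : ∃ g : E →+* M, g.comp (algebraMap F E) = i := by
  let ι := algebraMap M (AlgebraicClosure M)
  have : ExpChar M p := expChar_of_injective_ringHom i.injective p
  have : ExpChar E p := expChar_of_injective_algebraMap (algebraMap F E).injective p
  have : ExpChar (AlgebraicClosure M) p := expChar_of_injective_algebraMap ι.injective p
  -- `g` picks `p ^ n`-th roots in the algebraic closure, but `hi` provides them already in `M`.
  let g := PerfectRing.lift (algebraMap F E) (ι.comp i) p
  have hg : ∀ x, g x ∈ ι.fieldRange := fun x => by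
    obtain ⟨n, a, ha⟩ := IsPurelyInseparable.pow_mem F p x
    obtain ⟨y, hy⟩ := hi a n
    refine ⟨y, iterateFrobenius_inj _ p n ?_⟩
    simp only [iterateFrobenius_def, ← map_pow, hy, ← ha]
    exact (PerfectRing.lift_comp_apply (algebraMap F E) (ι.comp i) p a).symm
  refine ⟨ι.rangeRestrictFieldEquiv.symm.toRingHom.comp (g.codRestrict _ hg), ?_⟩
  ext a
  exact ι.injective <| (ι.rangeRestrictFieldEquiv_apply_symm_apply _).trans
    (PerfectRing.lift_comp_apply (algebraMap F E) (ι.comp i) p a)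

section Extension

variable {K L : Type*} [Field K] [Field L] [Algebra K L] [IsPurelyInseparable K L]
  (p : ℕ) [ExpChar K p] {σ : K →+* K} {σL : L →+* L}

theorem exists_extension_of_closedUnderTwists (hσ : ClosedUnderTwists p σ) :
    ∃ σL : L →+* L, ∀ x, σL (algebraMap K L x) = algebraMap K L (σ x) := by
  obtain ⟨σL, hσL⟩ :=
    IsPurelyInseparable.exists_comp_algebraMap_eq (E := L) p ((algebraMap K L).comp σ) fun a n => by
      obtain ⟨y, hy⟩ := hσ a n
      exact ⟨algebraMap K L y, by rw [← map_pow, hy, RingHom.comp_apply]⟩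
  exact ⟨σL, RingHom.ext_iff.1 hσL⟩

theorem closedUnderTwists_of_extension (hσ : ClosedUnderTwists p σ)
    (hσL : ∀ x, σL (algebraMap K L x) = algebraMap K L (σ x)) : ClosedUnderTwists p σL := by
  have : ExpChar L p := expChar_of_injective_algebraMap (algebraMap K L).injective p
  intro x n
  obtain ⟨m, a, ha⟩ := IsPurelyInseparable.pow_mem K p x
  obtain ⟨c, hc⟩ := hσ a (n + m)
  refine ⟨algebraMap K L c, iterateFrobenius_inj L p m ?_⟩
  simp only [iterateFrobenius_def]
  rw [← pow_mul, ← pow_add, ← map_pow, hc, ← map_pow, ← ha, hσL]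

theorem eventually_pow_pow_mem_map_fieldRange
    (hσL : ∀ x, σL (algebraMap K L x) = algebraMap K L (σ x)) {c : L}
    (hc : c ∈ σL.fieldRange) :
    ∀ᶠ R in atTop, c ^ p ^ R ∈ σ.fieldRange.map (algebraMap K L) := by
  obtain ⟨d, rfl⟩ := hc
  obtain ⟨m, a, ha⟩ := IsPurelyInseparable.pow_mem K p d
  refine eventually_pow_pow_mem p (n := m) ⟨σ a, ⟨a, rfl⟩, ?_⟩
  rw [← map_pow, ← ha, hσL]

theorem mem_fieldRange_of_isSepAlgElemOver_of_extension (hK : IsFF p σ)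
    (hσL : ∀ x, σL (algebraMap K L x) = algebraMap K L (σ x)) {x : L}
    (hx : IsSepAlgElemOver σL.fieldRange x) : x ∈ σL.fieldRange := by
  have : ExpChar L p := expChar_of_injective_algebraMap (algebraMap K L).injective p
  have ⟨f, hf, h0, h1⟩ := hx
  obtain ⟨m, hm⟩ := IsPurelyInseparable.pow_mem K p x
  obtain ⟨R, hcoeff, u, hu⟩ := ((eventually_all_finset f.support).2 fun n _ =>
    eventually_pow_pow_mem_map_fieldRange p hσL (hf n)).and (eventually_pow_pow_mem p hm) |>.exists
  have hsep : IsSepAlgElemOver (σ.fieldRange.map (algebraMap K L)) (algebraMap K L u) := by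
    rw [hu, ← iterateFrobenius_def]
    refine isSepAlgElemOver_apply_of_coeff_mem _ (fun n => ?_) h0 h1
    by_cases hn : n ∈ f.support
    · rw [iterateFrobenius_def]; exact hcoeff n hn
    · rw [notMem_support_iff.1 hn, map_zero]; exact zero_mem _
  obtain ⟨e, he⟩ := hK.2 u hsep.of_map
  exact hx.mem_of_pow_mem p (n := R) ⟨algebraMap K L e, by rw [hσL, he, hu]⟩

theorem isFF_of_extension (hK : IsFF p σ)
    (hσL : ∀ x, σL (algebraMap K L x) = algebraMap K L (σ x)) : IsFF p σL :=
  ⟨closedUnderTwists_of_extension p hK.1 hσL,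
    fun _ hx => mem_fieldRange_of_isSepAlgElemOver_of_extension p hK hσL hx⟩

end Extension

theorem statement6 {K L : Type*} [Field K] [Field L] (p : ℕ) [ExpChar K p]
    (σ : K →+* K) (hK : IsFF p σ)
    [Algebra K L]
    -- L is a purely inseparable algebraic extension of K
    (hins : ∀ x : L, ∃ n : ℕ, x ^ p ^ n ∈ (algebraMap K L).range) :
    -- σ extends uniquely to an endomorphism of L ...
    (∃! σL : L →+* L, ∀ x : K, σL (algebraMap K L x) = algebraMap K L (σ x)) ∧
    -- ... and any extension of σ to L makes L a model of FF
    (∀ σL : L →+* L, (∀ x : K, σL (algebraMap K L x) = algebraMap K L (σ x)) →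
      IsFF p σL) := by
  have : IsPurelyInseparable K L := (isPurelyInseparable_iff_pow_mem K p).2 hins
  obtain ⟨σL, hσL⟩ := exists_extension_of_closedUnderTwists (L := L) p hK.1
  refine ⟨⟨σL, hσL, fun τ hτ => ?_⟩, fun τ hτ => isFF_of_extension p hK hτ⟩
  exact IsPurelyInseparable.injective_comp_algebraMap K L L
    (RingHom.ext fun x => by simp only [RingHom.comp_apply, hτ, hσL])
end

section
/- Let M be a difference field and let K be a difference subfield of M which is inversive (σ(K) = K) and such that M is transformally algebraic over K. Then M is an algebraic field extension of σ(M). -/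
/-! If `x` were transcendental over `σ(M)`, then by induction on `n` the family
`x, σ x, …, σ^(n-1) x` would be algebraically independent over `K`: applying `σ` to the
family for `n` gives an independent family `σ x, …, σ^n x` over `σ(K) = K`, lying in `σ(M)`,
and adjoining `x`, transcendental over `σ(M) ⊇ K`, keeps it independent. Since a polynomial
involves only finitely many variables, the whole family `(σ^n x)` would then be independent
over `K`, contradicting that `x` is transformally algebraic over `K`. -/

/-- A family `b` is algebraically independent over the subfield `A`. -/
def AlgIndepOver {Ω : Type*} [Field Ω] (A : Subfield Ω) {ι : Type*} (b : ι → Ω) : Prop :=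
  ∀ P : MvPolynomial ι Ω, (∀ m, MvPolynomial.coeff m P ∈ A) →
    MvPolynomial.eval b P = 0 → P = 0

/-- `a` is transformally algebraic over the subfield `K` of `(Ω, σ)`: the family
`(σ^n a)` is algebraically dependent over `K`. -/
def TransAlgElemOver {Ω : Type*} [Field Ω] (σ : Ω →+* Ω) (K : Subfield Ω) (a : Ω) : Prop :=
  ¬ AlgIndepOver K (fun n : ℕ => (⇑σ)^[n] a)

open MvPolynomial

section

variable {Ω Ω' : Type*} [Field Ω] [Field Ω']

theorem exists_map_eq_of_coeff_mem {σ : Ω →+* Ω'} {K : Subfield Ω} {L : Subfield Ω'}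
    (hLK : L ≤ K.map σ) {ι : Type*} {Q : MvPolynomial ι Ω'} (hQ : ∀ m, Q.coeff m ∈ L) :
    ∃ Q' : MvPolynomial ι Ω, (∀ m, Q'.coeff m ∈ K) ∧ Q'.map σ = Q := by
  obtain ⟨Q₀, rfl⟩ : Q ∈ Set.range (map (σ.comp K.subtype)) := by
    rw [mem_range_map_iff_coeffs_subset]
    intro c hc
    obtain ⟨m, -, rfl⟩ := mem_coeffs_iff.mp hc
    obtain ⟨k, hk, hσk⟩ := hLK (hQ m)
    exact ⟨⟨k, hk⟩, hσk⟩
  exact ⟨Q₀.map K.subtype, fun m => by simp [coeff_map], by rw [map_map]⟩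

theorem AlgIndepOver.ringHom_comp {σ : Ω →+* Ω'} {K : Subfield Ω} {L : Subfield Ω'}
    (hLK : L ≤ K.map σ) {ι : Type*} {b : ι → Ω} (hb : AlgIndepOver K b) :
    AlgIndepOver L (σ ∘ b) := by
  intro P hPL hPb
  obtain ⟨P', hP'K, rfl⟩ := exists_map_eq_of_coeff_mem hLK hPL
  have hP'b : eval b P' = 0 := σ.injective (by rw [map_eval, hPb, map_zero])
  rw [hb P' hP'K hP'b, map_zero]

theorem algIndepOver_of_isEmpty {K : Subfield Ω} {ι : Type*} [IsEmpty ι] (b : ι → Ω) :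
    AlgIndepOver K b := by
  intro P _ hPb
  rw [eq_C_of_isEmpty P, eval_C] at hPb
  rw [eq_C_of_isEmpty P, hPb, map_zero]

theorem AlgIndepOver.fin_cons {K F : Subfield Ω} (hKF : K ≤ F) {n : ℕ} {y : Fin n → Ω}
    (hy : AlgIndepOver K y) (hyF : ∀ i, y i ∈ F) {x : Ω} (hx : ¬ IsAlgElemOver F x) :
    AlgIndepOver K (Fin.cons x y : Fin (n + 1) → Ω) := by
  intro P hPK hPx
  rw [eval_eq_eval_mv_eval'] at hPx
  have hcoeffK : ∀ k m, ((finSuccEquiv Ω n P).coeff k).coeff m ∈ K := fun k m => by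
    rw [finSuccEquiv_coeff_coeff]
    exact hPK _
  have hzero : (finSuccEquiv Ω n P).map (eval y) = 0 := by
    by_contra hne
    refine hx ⟨_, hne, fun k => ?_, hPx⟩
    rw [Polynomial.coeff_map]
    exact eval_mem (fun m _ => hKF (hcoeffK k m)) hyF
  apply (finSuccEquiv Ω n).injective
  ext1 k
  rw [map_zero, Polynomial.coeff_zero]
  refine hy _ (hcoeffK k) ?_
  simpa using congr(Polynomial.coeff $hzero k)

theorem algIndepOver_of_forall_fin {K : Subfield Ω} {b : ℕ → Ω}
    (h : ∀ n, AlgIndepOver K (fun i : Fin n => b i)) : AlgIndepOver K b := by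
  intro P hPK hPb
  obtain ⟨N, hN⟩ : ∃ N, ∀ i ∈ P.vars, i < N :=
    ⟨P.vars.sup id + 1, fun i hi => Nat.lt_succ_of_le (Finset.le_sup (f := id) hi)⟩
  obtain ⟨Q, rfl⟩ := exists_rename_eq_of_vars_subset_range P (Fin.val : Fin N → ℕ)
    Fin.val_injective fun i hi => ⟨⟨i, hN i hi⟩, rfl⟩
  have hQK : ∀ m, Q.coeff m ∈ K := fun m => by
    rw [← coeff_rename_mapDomain _ Fin.val_injective]
    exact hPK _
  rw [eval_rename] at hPb
  rw [h N Q hQK hPb, map_zero]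

theorem algIndepOver_iterate_fin {σ : Ω →+* Ω} {K : Subfield Ω} (hinv : K.map σ = K) {x : Ω}
    (hx : ¬ IsAlgElemOver σ.fieldRange x) (n : ℕ) :
    AlgIndepOver K (fun i : Fin n => σ^[i] x) := by
  induction n with
  | zero => exact algIndepOver_of_isEmpty _
  | succ n ih =>
    have hKF : K ≤ σ.fieldRange := hinv ▸ fun _ ⟨y, _, hy⟩ => ⟨y, hy⟩
    convert (ih.ringHom_comp hinv.ge).fin_cons hKF (fun i => σ.mem_fieldRange_self _) hx using 1
    funext i
    refine Fin.cases rfl (fun i => ?_) i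
    simp [Function.iterate_succ_apply']

end

theorem statement7 {M : Type*} [Field M] (σ : M →+* M) (K : Subfield M)
    -- K is an inversive difference subfield of M
    (hinv : K.map σ = K)
    -- M is transformally algebraic over K
    (hta : ∀ a : M, TransAlgElemOver σ K a) :
    -- M is algebraic over σ(M)
    ∀ x : M, IsAlgElemOver σ.fieldRange x := by
  intro x
  by_contra hx
  exact hta x (algIndepOver_of_forall_fin (algIndepOver_iterate_fin hinv hx))
end

section
/- Let K be a difference field closed under twists and let L/K be a transformally separable extension of difference fields. Then L is separable over K as a field extension. -/
/-- The subfield `K` of `(Ω, σ)` is closed under twists. -/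
def SubClosedUnderTwists {Ω : Type*} [Field Ω] (p : ℕ) (σ : Ω →+* Ω)
    (K : Subfield Ω) : Prop :=
  ∀ x ∈ K, ∀ n : ℕ, ∃ y ∈ K, y ^ p ^ n = σ x

theorem statement8 {L : Type*} [Field L] (p : ℕ) [ExpChar L p] (σ : L →+* L)
    (K : Subfield L) (hKσ : ∀ x ∈ K, σ x ∈ K)
    (hKtw : SubClosedUnderTwists p σ K)
    (hts : TransSepOver σ K ⊤) :
    IsSepExt p K ⊤ := by
  intro n b hb hindep c hc hsum
  have hσinj : Function.Injective σ := σ.injective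
  have hfrinj : Function.Injective (frobenius L p) := (frobenius L p).injective
  -- roots of σ(b i) in K
  choose e he1 he2 using fun i => hKtw (b i) (hb i) 1
  simp only [pow_one] at he2
  -- e is linearly independent over σ(K)
  have heind : LinIndepOver (K.map σ) e := by
    intro a ha hsum' i
    choose a' ha' haeq using fun i => Subfield.mem_map.mp (ha i)
    have key : (∑ j, (a' j) ^ p * b j) = 0 := by
      apply hσinj
      rw [map_sum, map_zero]
      have : ∀ j, σ ((a' j) ^ p * b j) = (a j * e j) ^ p := by
        intro j
        rw [map_mul, map_pow, ← haeq j, ← he2 j, mul_pow]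
      rw [Finset.sum_congr rfl fun j _ => this j]
      have : (∑ j, (a j * e j) ^ p) = (frobenius L p) (∑ j, a j * e j) := by
        rw [map_sum]; rfl
      rw [this, hsum', map_zero]
    have := hindep (fun j => (a' j) ^ p)
      (fun j => Subfield.mem_map.mpr ⟨a' j, ha' j, rfl⟩) key i
    have ha'0 : a' i = 0 := pow_eq_zero_iff (expChar_pos L p).ne' |>.mp this
    rw [← haeq i, ha'0, map_zero]
  -- upgrade via transformal separability
  have heind' : LinIndepOver ((⊤ : Subfield L).map σ) e := hts n e he1 heind
  -- decompose the coefficients c i as p-th powers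
  choose d hd' hd using fun i => Subfield.mem_map.mp (hc i)
  have hrel : (∑ j, σ (d j) * e j) = 0 := by
    apply hfrinj
    rw [map_sum, map_zero]
    have : ∀ j, (frobenius L p) (σ (d j) * e j) = σ (c j * b j) := by
      intro j
      rw [map_mul, frobenius_def, frobenius_def, ← map_pow, he2 j, ← map_mul, ← hd j,
        frobenius_def]
    rw [Finset.sum_congr rfl fun j _ => this j, ← map_sum, hsum, map_zero]
  intro i
  have := heind' (fun j => σ (d j))
    (fun j => Subfield.mem_map.mpr ⟨d j, Subfield.mem_top _, rfl⟩) hrel i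
  have : d i = 0 := hσinj (by rw [this, map_zero])
  rw [← hd i, this, map_zero]
end

section
/- Let K be a model of VFE whose valuation ring O is Henselian. Then the residue field k of K, equipped with the injective ring endomorphism induced by σ (which exists since σ⁻¹(O) = O and σ⁻¹(M) = M), is a model of FF. -/
lemma resEval {R S : Type*} [CommRing R] [CommRing S] (f : R →+* S) (q : Polynomial R)
    (r : R) : f (q.eval r) = (q.map f).eval (f r) := by
  rw [Polynomial.eval_map]
  exact (Polynomial.eval₂_hom f r).symm

theorem statement18 {K : Type*} [Field K] {Γ : Type*}
    [LinearOrderedCommGroupWithZero Γ]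
    (p : ℕ) [ExpChar K p] (v : Valuation K Γ) (σ : K →+* K)
    -- σ⁻¹(O) = O and σ⁻¹(M) = M (transformal valued field)
    (hO : ∀ x : K, v (σ x) ≤ 1 ↔ v x ≤ 1)
    (hM : ∀ x : K, v (σ x) < 1 ↔ v x < 1)
    -- ω-increasing: nγ < σγ for all γ > 0 in the value group
    (hω : ∀ x : K, v x ≠ 0 → v x < 1 → ∀ n : ℕ, v (σ x) < v x ^ n)
    -- the underlying difference field is a model of FF
    (hKFF : IsFF p σ)
    -- equal characteristic: the residue field has the same characteristic exponent
    [ExpChar (IsLocalRing.ResidueField ↥v.valuationSubring) p]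
    -- the valuation ring is Henselian
    [HenselianLocalRing ↥v.valuationSubring] :
    -- the induced endomorphism of the residue field exists ...
    (∃ σb : IsLocalRing.ResidueField ↥v.valuationSubring →+*
        IsLocalRing.ResidueField ↥v.valuationSubring,
      ∀ x y : ↥v.valuationSubring, σ (x : K) = (y : K) →
        σb (IsLocalRing.residue _ x) = IsLocalRing.residue _ y) ∧
    -- ... and the residue field equipped with it is a model of FF
    (∀ σb : IsLocalRing.ResidueField ↥v.valuationSubring →+*
        IsLocalRing.ResidueField ↥v.valuationSubring,
      (∀ x y : ↥v.valuationSubring, σ (x : K) = (y : K) →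
        σb (IsLocalRing.residue _ x) = IsLocalRing.residue _ y) →
      IsFF p σb) := by
  classical
  set O := v.valuationSubring with hOdef
  -- membership in the maximal ideal
  have hmax : ∀ x : ↥O, x ∈ IsLocalRing.maximalIdeal ↥O ↔ v ↑x < 1 := by
    intro x
    rw [ValuationSubring.valuation_lt_one_iff]
    exact ((Valuation.isEquiv_valuation_valuationSubring v).lt_one_iff_lt_one).symm
  -- σ restricted to the valuation ring
  let σO : ↥O →+* ↥O :=
  { toFun := fun x => ⟨σ x, (hO x).mpr x.2⟩
    map_one' := Subtype.ext (by simp)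
    map_mul' := fun a b => Subtype.ext (by simp)
    map_zero' := Subtype.ext (by simp)
    map_add' := fun a b => Subtype.ext (by simp) }
  have hσO : ∀ x : ↥O, ((σO x : ↥O) : K) = σ (x : K) := fun x => rfl
  -- construct the induced endomorphism of the residue field
  constructor
  · let τ : ↥O →+* IsLocalRing.ResidueField ↥O :=
      (IsLocalRing.residue ↥O).comp σO
    have hτ : ∀ a ∈ IsLocalRing.maximalIdeal ↥O, τ a = 0 := by
      intro a ha
      have : σO a ∈ IsLocalRing.maximalIdeal ↥O := by
        rw [hmax]
        rw [hσO]
        exact (hM a).mpr ((hmax a).mp ha)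
      simpa [τ, IsLocalRing.residue_eq_zero_iff] using
        (IsLocalRing.residue_eq_zero_iff (σO a)).mpr this
    refine ⟨Ideal.Quotient.lift _ τ hτ, ?_⟩
    intro x y hxy
    have hxy' : σO x = y := Subtype.ext hxy
    refine (Ideal.Quotient.lift_mk _ _ _).trans ?_
    show IsLocalRing.residue ↥O (σO x) = _
    rw [hxy']
  · intro σb hσb
    constructor
    · -- closed under twists
      intro ξ n
      obtain ⟨x, rfl⟩ := IsLocalRing.residue_surjective (R := ↥O) ξ
      obtain ⟨y, hy⟩ := hKFF.1 (x : K) n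
      have hpn : p ^ n ≠ 0 := pow_ne_zero _ (expChar_ne_zero K p)
      have hvy : v y ≤ 1 := by
        by_contra h
        push_neg at h
        have h1 : (1 : Γ) < v y ^ p ^ n := one_lt_pow' h hpn
        rw [← map_pow, hy] at h1
        exact absurd ((hO x).mpr x.2) (not_le.mpr h1)
      set Y : ↥O := ⟨y, hvy⟩ with hY
      have hYpow : σ (x : K) = ((Y ^ p ^ n : ↥O) : K) := by
        push_cast
        exact hy.symm
      refine ⟨IsLocalRing.residue _ Y, ?_⟩
      rw [← map_pow]
      exact (hσb x (Y ^ p ^ n) hYpow).symm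
    · -- relative separable algebraic closedness
      intro ξ hξ
      obtain ⟨f, hcoeff, heval, hder⟩ := hξ
      have hf0 : f ≠ 0 := by
        intro h
        rw [h] at hder
        simp at hder
      set c := f.leadingCoeff with hc
      have hcne : c ≠ 0 := Polynomial.leadingCoeff_ne_zero.mpr hf0
      have hcmem : c ∈ σb.fieldRange := hcoeff f.natDegree
      set g := f * Polynomial.C c⁻¹ with hg
      have hgmonic : g.Monic := Polynomial.monic_mul_leadingCoeff_inv hf0
      have hgcoeff : ∀ n, g.coeff n ∈ σb.fieldRange := by
        intro n
        rw [hg, Polynomial.coeff_mul_C]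
        exact mul_mem (hcoeff n) (inv_mem hcmem)
      have hgeval : g.eval ξ = 0 := by
        rw [hg, Polynomial.eval_mul, heval, zero_mul]
      have hgder : (Polynomial.derivative g).eval ξ ≠ 0 := by
        rw [hg, Polynomial.derivative_mul, Polynomial.derivative_C, mul_zero, add_zero,
          Polynomial.eval_mul, Polynomial.eval_C]
        exact mul_ne_zero hder (inv_ne_zero hcne)
      -- lift g to a monic polynomial over O with coefficients in σ(O)
      let τ : ↥O →+* IsLocalRing.ResidueField ↥O :=
        (IsLocalRing.residue ↥O).comp σO
      have hτσb : ∀ e : ↥O, τ e = σb (IsLocalRing.residue _ e) := by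
        intro e
        exact (hσb e (σO e) rfl).symm
      have hglifts : g ∈ Polynomial.lifts τ := by
        rw [Polynomial.lifts_iff_coeff_lifts]
        intro n
        obtain ⟨z, hz⟩ := hgcoeff n
        obtain ⟨e, he⟩ := IsLocalRing.residue_surjective (R := ↥O) z
        exact ⟨e, by rw [hτσb e, he, hz]⟩
      obtain ⟨F, hFmap, _, hFmonic⟩ :=
        Polynomial.lifts_and_degree_eq_and_monic hglifts hgmonic
      set G := F.map σO with hGdef
      have hGmonic : G.Monic := hFmonic.map σO
      have hGres : G.map (IsLocalRing.residue ↥O) = g := by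
        rw [hGdef, Polynomial.map_map]
        exact hFmap
      -- lift ξ and apply Henselianity
      obtain ⟨a₀, ha₀⟩ := IsLocalRing.residue_surjective (R := ↥O) ξ
      have h1 : G.eval a₀ ∈ IsLocalRing.maximalIdeal ↥O := by
        rw [← IsLocalRing.residue_eq_zero_iff]
        rw [resEval, hGres, ha₀, hgeval]
      have h2 : IsUnit ((Polynomial.derivative G).eval a₀) := by
        by_contra h
        have hmem : (Polynomial.derivative G).eval a₀ ∈ IsLocalRing.maximalIdeal ↥O := h
        have : IsLocalRing.residue ↥O ((Polynomial.derivative G).eval a₀) = 0 :=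
          (IsLocalRing.residue_eq_zero_iff _).mpr hmem
        rw [resEval, ← Polynomial.derivative_map, hGres, ha₀] at this
        exact hgder this
      obtain ⟨a, haroot, hamem⟩ :=
        HenselianLocalRing.is_henselian G hGmonic a₀ h1 h2
      have hares : IsLocalRing.residue ↥O a = ξ := by
        have : IsLocalRing.residue ↥O (a - a₀) = 0 :=
          (IsLocalRing.residue_eq_zero_iff _).mpr hamem
        rw [map_sub, sub_eq_zero] at this
        rw [this, ha₀]
      have h2' : IsUnit ((Polynomial.derivative G).eval a) := by
        by_contra h
        have hmem : (Polynomial.derivative G).eval a ∈ IsLocalRing.maximalIdeal ↥O := h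
        have : IsLocalRing.residue ↥O ((Polynomial.derivative G).eval a) = 0 :=
          (IsLocalRing.residue_eq_zero_iff _).mpr hmem
        rw [resEval, ← Polynomial.derivative_map, hGres, hares] at this
        exact hgder this
      -- view G in K
      let φ : ↥O →+* K := O.subtype
      have hφinj : Function.Injective φ := Subtype.coe_injective
      set H := G.map φ with hHdef
      have hHsep : IsSepAlgElemOver σ.fieldRange ((a : ↥O) : K) := by
        refine ⟨H, ?_, ?_, ?_⟩
        · intro n
          rw [hHdef, Polynomial.coeff_map, hGdef, Polynomial.coeff_map]
          exact ⟨(F.coeff n : K), rfl⟩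
        · rw [hHdef, show ((a : ↥O) : K) = φ a from rfl, ← resEval, haroot]
          exact map_zero φ
        · rw [hHdef, Polynomial.derivative_map,
            show ((a : ↥O) : K) = φ a from rfl, ← resEval]
          intro h
          exact h2'.ne_zero (hφinj (h.trans (map_zero φ).symm))
      obtain ⟨b, hb⟩ := hKFF.2 _ hHsep
      have hbO : b ∈ O := by
        rw [hOdef, Valuation.mem_valuationSubring_iff, ← hO]
        rw [hb]
        exact a.2
      refine ⟨IsLocalRing.residue _ (⟨b, hbO⟩ : ↥O), ?_⟩
      rw [hσb ⟨b, hbO⟩ a hb, hares]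
end

section
/- Let F be a model of VFE which is nontrivially valued, and suppose that for every nonzero t in the maximal ideal M the map x ↦ σ(x) − t·x is surjective from F to F. Then F lies dense in its inversive hull; concretely, for every a ∈ F, every integer n ≥ 1, and every γ in the value group Γ, there exists b ∈ F with v(σ^n(b) − a) > γ. -/
namespace Valuation

variable {F Γ : Type*} [Field F] [LinearOrderedCommGroupWithZero Γ] {v : Valuation F Γ}
  {σ : F →+* F}

lemma exists_ne_zero_val_lt_min_one [v.IsNontrivial] {e : F} (he : e ≠ 0) :
    ∃ t ≠ 0, v t < v e ∧ v t < 1 := by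
  obtain ⟨d, hd0, hd1⟩ := IsNontrivial.exists_lt_one (v := v)
  rcases le_or_gt (v e) 1 with he1 | he1
  · have hed : v (e * d) < v e := by
      rw [map_mul]
      exact mul_lt_of_lt_one_right (v.pos_iff.mpr he) hd1
    exact ⟨e * d, mul_ne_zero he hd0, hed, hed.trans_le he1⟩
  · exact ⟨d, hd0, hd1.trans he1, hd1⟩

lemma val_map_le_of_val_lt_one (hσ : ∀ x, v x ≠ 0 → v x < 1 → v (σ x) < v x) {y : F}
    (hy : v y < 1) : v (σ y) ≤ v y := by
  rcases eq_or_ne y 0 with rfl | hy0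
  · simp
  · exact (hσ y (v.ne_zero_iff.mpr hy0) hy).le

lemma val_iterate_le_of_val_lt_one (hσ : ∀ x, v x ≠ 0 → v x < 1 → v (σ x) < v x) (k : ℕ)
    {y : F} (hy : v y < 1) : v ((⇑σ)^[k] y) ≤ v y := by
  induction k generalizing y with
  | zero => exact le_rfl
  | succ k ih =>
    have hσy := val_map_le_of_val_lt_one hσ hy
    rw [Function.iterate_succ_apply]
    exact (ih (hσy.trans_lt hy)).trans hσy

lemma val_lt_val_map_of_one_lt_val (hσ : ∀ x, v x ≠ 0 → v x < 1 → v (σ x) < v x) {x : F}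
    (hx : 1 < v x) : v x < v (σ x) := by
  have hx0 : x ≠ 0 := by
    rintro rfl
    simp at hx
  have hinv := hσ x⁻¹ (by simp [hx0]) ((v.one_lt_val_iff hx0).mp hx)
  rwa [map_inv₀, map_inv₀, map_inv₀,
    inv_lt_inv₀ (v.pos_iff.mpr (by simpa using hx0)) (v.pos_iff.mpr hx0)] at hinv

lemma val_le_max_one_of_map_sub_mul_eq (hσ : ∀ x, v x ≠ 0 → v x < 1 → v (σ x) < v x)
    {t x a : F} (ht : v t < 1) (h : σ x - t * x = a) : v x ≤ max 1 (v a) := by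
  by_contra! hlt
  have hx1 : 1 < v x := (le_max_left _ _).trans_lt hlt
  have htx : v (t * x) < v x := by
    rw [map_mul]
    exact mul_lt_of_lt_one_left (zero_lt_one.trans hx1) ht
  have hσx : v (σ x) < v x := by
    rw [show σ x = t * x + a by rw [← h]; ring]
    exact v.map_add_lt htx ((le_max_right _ _).trans_lt hlt)
  exact lt_asymm hσx (val_lt_val_map_of_one_lt_val hσ hx1)

lemma exists_val_map_sub_lt [v.IsNontrivial] (hσ : ∀ x, v x ≠ 0 → v x < 1 → v (σ x) < v x)
    (hsurj : ∀ t : F, t ≠ 0 → v t < 1 → Function.Surjective fun x : F => σ x - t * x)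
    (a : F) {c : F} (hc : c ≠ 0) : ∃ b, v (σ b - a) < v c := by
  obtain ⟨m, hm0, hm⟩ : ∃ m : F, m ≠ 0 ∧ v m = max 1 (v a) := by
    rcases le_total (v a) 1 with ha | ha
    · exact ⟨1, one_ne_zero, by simp [ha]⟩
    · exact ⟨a, fun h => by simp [h] at ha, by simp [ha]⟩
  obtain ⟨t, ht0, htc, ht1⟩ := exists_ne_zero_val_lt_min_one (v := v) (div_ne_zero hc hm0)
  obtain ⟨x, hx⟩ := hsurj t ht0 ht1 a
  have hx' : σ x - a = t * x := by rw [← hx]; ring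
  refine ⟨x, ?_⟩
  calc v (σ x - a) = v t * v x := by rw [hx', map_mul]
    _ ≤ v t * v m := by
      rw [hm]
      exact mul_le_mul_right (val_le_max_one_of_map_sub_mul_eq hσ ht1 hx) _
    _ < v (c / m) * v m := mul_lt_mul_of_pos_right htc (v.pos_iff.mpr hm0)
    _ = v c := by rw [map_div₀, div_mul_cancel₀ _ (v.ne_zero_iff.mpr hm0)]

lemma exists_val_iterate_sub_lt [v.IsNontrivial] (hσ : ∀ x, v x ≠ 0 → v x < 1 → v (σ x) < v x)
    (hsurj : ∀ t : F, t ≠ 0 → v t < 1 → Function.Surjective fun x : F => σ x - t * x)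
    (n : ℕ) (a : F) {c : F} (hc : c ≠ 0) : ∃ b, v ((⇑σ)^[n] b - a) < v c := by
  induction n with
  | zero => exact ⟨a, by simpa using v.pos_iff.mpr hc⟩
  | succ k ih =>
    obtain ⟨b', hb'⟩ := ih
    obtain ⟨c', hc'0, hc'c, hc'1⟩ := exists_ne_zero_val_lt_min_one (v := v) hc
    obtain ⟨b, hb⟩ := exists_val_map_sub_lt hσ hsurj b' hc'0
    have hsplit : (⇑σ)^[k + 1] b - a = (⇑σ)^[k] (σ b - b') + ((⇑σ)^[k] b' - a) := by
      rw [Function.iterate_succ_apply, iterate_map_sub]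
      ring
    refine ⟨b, hsplit ▸ v.map_add_lt ?_ hb'⟩
    exact (val_iterate_le_of_val_lt_one hσ k (hb.trans hc'1)).trans_lt (hb.trans hc'c)

end Valuation

theorem statement19_general {F : Type*} [Field F] {Γ : Type*}
    [LinearOrderedCommGroupWithZero Γ]
    (v : Valuation F Γ) (σ : F →+* F)
    -- ω-increasing: nγ < σγ for all γ > 0 in the value group
    (hω : ∀ x : F, v x ≠ 0 → v x < 1 → ∀ n : ℕ, v (σ x) < v x ^ n)
    -- the valuation is nontrivial
    (hnt : ∃ x : F, v x ≠ 0 ∧ v x ≠ 1)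
    -- for every nonzero t in the maximal ideal, x ↦ σ(x) − t·x is surjective
    (hsurj : ∀ t : F, t ≠ 0 → v t < 1 →
      Function.Surjective fun x : F => σ x - t * x) :
    -- F lies dense in its inversive hull: every γ = v c (c ≠ 0) in the value group
    -- can be exceeded
    ∀ (a : F) (n : ℕ), 1 ≤ n → ∀ c : F, c ≠ 0 →
      ∃ b : F, v ((⇑σ)^[n] b - a) < v c := by
  have : v.IsNontrivial := ⟨hnt⟩
  have hσ : ∀ x, v x ≠ 0 → v x < 1 → v (σ x) < v x := fun x hx0 hx1 => by
    simpa using hω x hx0 hx1 1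
  intro a n _ c hc
  exact Valuation.exists_val_iterate_sub_lt hσ hsurj n a hc

theorem statement19 {F : Type*} [Field F] {Γ : Type*}
    [LinearOrderedCommGroupWithZero Γ]
    (p : ℕ) [ExpChar F p] (v : Valuation F Γ) (σ : F →+* F)
    -- σ⁻¹(O) = O and σ⁻¹(M) = M (transformal valued field)
    (hO : ∀ x : F, v (σ x) ≤ 1 ↔ v x ≤ 1)
    (hM : ∀ x : F, v (σ x) < 1 ↔ v x < 1)
    -- ω-increasing: nγ < σγ for all γ > 0 in the value group
    (hω : ∀ x : F, v x ≠ 0 → v x < 1 → ∀ n : ℕ, v (σ x) < v x ^ n)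
    -- the underlying difference field is a model of FF
    (hFFF : IsFF p σ)
    -- equal characteristic
    [ExpChar (IsLocalRing.ResidueField ↥v.valuationSubring) p]
    -- the valuation is nontrivial
    (hnt : ∃ x : F, v x ≠ 0 ∧ v x ≠ 1)
    -- for every nonzero t in the maximal ideal, x ↦ σ(x) − t·x is surjective
    (hsurj : ∀ t : F, t ≠ 0 → v t < 1 →
      Function.Surjective fun x : F => σ x - t * x) :
    -- F lies dense in its inversive hull: every γ = v c (c ≠ 0) in the value group
    -- can be exceeded
    ∀ (a : F) (n : ℕ), 1 ≤ n → ∀ c : F, c ≠ 0 →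
      ∃ b : F, v ((⇑σ)^[n] b - a) < v c :=
  statement19_general v σ hω hnt hsurj
end
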